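/- arXiv:0811.2597 — 6 statements merged into one kernel-verified Lean document; each statement's English description precedes it below -/
import Mathlib

section
/- Let Π be an orthogonal projector and X, Y operators on a finite-dimensional complex Hilbert space such that ‖X‖_∞ ≤ 1, ‖Y‖_∞ ≤ 1, ΠX = XΠ = Π, ‖(I−Π)X(I−Π)‖_∞ ≤ 1 − ε_C, and ‖ΠYΠ‖_∞ ≤ 1 − ε_A, where 0 < ε_C < 1 and 0 < ε_A < 1. Then for any 0 < p < 1, ‖pX + (1−p)Y‖_∞ ≤ 1 − (ε_A/12)·min(p ε_C, 1−p) < 1. -/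
/-!
For a unit vector `v` put `a = Π v`, `b = (I - Π) v` and `t = min (p ε_C) (1 - p)`. Since
`‖p x + (1 - p) y‖² = p ‖x‖² + (1 - p) ‖y‖² - p (1 - p) ‖x - y‖²` and
`1 - ‖X v‖² ≥ ε_C (2 - ε_C) ‖b‖²`, the defect `1 - ‖(p X + (1 - p) Y) v‖²` is at least `t` times
`(2 - ε_C) ‖b‖² + (1 - ‖Y v‖²) + ‖X v - Y v‖² / 2`, and it suffices to bound this by `ε_A / 6`
from below. If `b` is small then `X v ≈ a`. Either `Y a` has a large component off the range of `Π`,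
and then `X v - Y v` is large, or `‖Y a‖` is well below `‖a‖` because `‖Π Y Π‖ ≤ 1 - ε_A`. In the
second case `1 - ‖Y v‖²` is large: `x ↦ ‖x‖² - ‖Y x‖²` is a positive semidefinite quadratic form,
so it satisfies `q (u - w) ≤ 2 q u + 2 q w`.
-/

lemma min_mul_mul_add_le {p c y g₁ g₂ g₃ : ℝ} (hp0 : 0 ≤ p) (hp1 : p ≤ 1) (hc : c ≤ 1)
    (hy : 0 ≤ y) (hg₁ : c * y ≤ g₁) (hg₂ : 0 ≤ g₂) (hg₃ : 0 ≤ g₃) :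
    min (p * c) (1 - p) * (y + g₂ + g₃ / 2) ≤ p * g₁ + (1 - p) * g₂ + p * (1 - p) * g₃ := by
  set t := min (p * c) (1 - p)
  have htc : t ≤ p * c := min_le_left _ _
  have htp : t ≤ 1 - p := min_le_right _ _
  have ht : t ≤ 2 * (p * (1 - p)) := by
    rcases le_total p (1 - p) with h | h <;> nlinarith
  nlinarith [mul_le_mul_of_nonneg_right htc hy, mul_le_mul_of_nonneg_right htp hg₂,
    mul_le_mul_of_nonneg_right ht hg₃, mul_le_mul_of_nonneg_left hg₁ hp0]

-- `α = ‖Π v‖`, `β = ‖(I - Π) v‖`, `γ = 2 - ε_C`, `κ = ‖(I - Π) Y Π v‖`, `s = γ β² + (1 - ‖Y v‖²)`,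
-- `d = ‖X v - Y v‖`.
lemma div_six_le_of_gap_bounds {α β γ ε κ s d : ℝ} (hα : 0 ≤ α) (hβ : 0 ≤ β)
    (hαβ : α ^ 2 + β ^ 2 = 1) (hγ1 : 1 ≤ γ) (hγ2 : γ ≤ 2) (hε0 : 0 < ε) (hε1 : ε < 1)
    (hκ : 0 ≤ κ) (hs : γ * β ^ 2 ≤ s) (hsc : α ^ 2 * (ε * (2 - ε)) - κ ^ 2 ≤ 2 * s)
    (hdP : ε * α - β ≤ d) (hdQ : κ - γ * β ≤ d) :
    ε / 6 ≤ s + d ^ 2 / 2 := by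
  rcases le_or_gt (ε / 6) (β ^ 2) with hβε | hβε
  · nlinarith [sq_nonneg d]
  have hα2 : 5 / 6 ≤ α ^ 2 := by linarith
  rcases le_or_gt (2 * ε / 3) (κ ^ 2) with hκε | hκε
  · have hγβ : γ * β ≤ κ :=
      (pow_le_pow_iff_left₀ (by positivity) hκ two_ne_zero).1 <| by
        nlinarith [mul_pow γ β 2,
          mul_le_mul_of_nonneg_right (show γ ^ 2 ≤ 4 by nlinarith) (sq_nonneg β)]
    have hd : (κ - γ * β) ^ 2 ≤ d ^ 2 := pow_le_pow_left₀ (by linarith) hdQ 2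
    nlinarith [sq_nonneg (κ - 2 * γ * β),
      mul_nonneg (mul_nonneg (by linarith : 0 ≤ γ) (sq_nonneg β)) (by linarith : 0 ≤ 2 - γ)]
  rcases le_total β (ε * α) with hβα | hεαβ
  · have hd : (ε * α - β) ^ 2 ≤ d ^ 2 := pow_le_pow_left₀ (by linarith) hdP 2
    have hβ41 : β < 41 / 100 := by nlinarith
    have hαβ1 : α * β ≤ β := mul_le_of_le_one_left hβ (by nlinarith)
    -- `α² ε (2 - ε) + (ε α - β)² - ε ≥ ε (1 - ε β² - 2 α β)`, which is nonnegative as `β² < 1 / 6`.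
    have hpos : 0 ≤ 1 - ε * β ^ 2 - 2 * α * β := by
      nlinarith [mul_le_of_le_one_left (sq_nonneg β) hε1.le]
    nlinarith [mul_nonneg hε0.le hpos, mul_nonneg (sq_nonneg (1 - ε)) (sq_nonneg β)]
  · have hε5 : ε ≤ 1 / 5 := by
      nlinarith [pow_le_pow_left₀ (by positivity) hεαβ 2,
        mul_le_mul_of_nonneg_left hα2 (sq_nonneg ε)]
    nlinarith [sq_nonneg d, mul_le_mul_of_nonneg_right hα2 (by nlinarith : 0 ≤ ε * (2 - ε))]

section InnerProductSpace

variable {𝕜 E F : Type*} [RCLike 𝕜] [NormedAddCommGroup E] [InnerProductSpace 𝕜 E]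
  [NormedAddCommGroup F] [InnerProductSpace 𝕜 F]

lemma norm_sq_smul_add_one_sub_smul {V : Type*} [NormedAddCommGroup V] [InnerProductSpace ℝ V]
    (p : ℝ) (x y : V) :
    ‖p • x + (1 - p) • y‖ ^ 2 = p * ‖x‖ ^ 2 + (1 - p) * ‖y‖ ^ 2 - p * (1 - p) * ‖x - y‖ ^ 2 := by
  rw [norm_add_sq_real, norm_sub_sq_real, norm_smul, norm_smul, real_inner_smul_left,
    real_inner_smul_right, mul_pow, mul_pow, Real.norm_eq_abs, Real.norm_eq_abs, sq_abs, sq_abs]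
  ring

lemma norm_sq_sub_norm_sq_apply_sub_le {Y : E →L[𝕜] F} (hY : ‖Y‖ ≤ 1) (u w : E) :
    ‖u - w‖ ^ 2 - ‖Y (u - w)‖ ^ 2 ≤ 2 * (‖u‖ ^ 2 - ‖Y u‖ ^ 2) + 2 * (‖w‖ ^ 2 - ‖Y w‖ ^ 2) := by
  have hE := parallelogram_law_with_norm 𝕜 u w
  have hF := parallelogram_law_with_norm 𝕜 (Y u) (Y w)
  have hadd : ‖Y (u + w)‖ ≤ ‖u + w‖ := Y.le_of_opNorm_le hY _ |>.trans_eq (one_mul _)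
  rw [map_sub]
  rw [map_add] at hadd
  nlinarith [norm_nonneg (Y u + Y w)]

variable [CompleteSpace E] {P : E →L[𝕜] E}

lemma IsStarProjection.norm_sq_apply_add_norm_sq_one_sub_apply (hP : IsStarProjection P) (x : E) :
    ‖P x‖ ^ 2 + ‖(1 - P) x‖ ^ 2 = ‖x‖ ^ 2 := by
  obtain ⟨K, _, rfl⟩ := isStarProjection_iff_eq_starProjection.mp hP
  rw [← K.starProjection_orthogonal', K.norm_sq_eq_add_norm_sq_starProjection x]

lemma IsStarProjection.norm_apply_le (hP : IsStarProjection P) (x : E) : ‖P x‖ ≤ ‖x‖ :=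
  sq_le_sq₀ (norm_nonneg _) (norm_nonneg _) |>.1 <| by
    nlinarith [hP.norm_sq_apply_add_norm_sq_one_sub_apply x, sq_nonneg ‖(1 - P) x‖]

end InnerProductSpace

section Gap

variable {H : Type*} [NormedAddCommGroup H] [InnerProductSpace ℂ H] [CompleteSpace H]
  {P X Y : H →L[ℂ] H} {εC εA : ℝ}

lemma norm_one_sub_apply_le_of_gap (hP : IsStarProjection P) (hXP : X ∘L P = P)
    (hXgap : ‖(1 - P) ∘L X ∘L (1 - P)‖ ≤ 1 - εC) (v : H) :
    ‖(1 - P) (X v)‖ ≤ (1 - εC) * ‖(1 - P) v‖ := by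
  have h : ((1 - P) ∘L X ∘L (1 - P)) ((1 - P) v) = (1 - P) (X v) := by
    have hXPv : X (P v) = P v := congr($hXP v)
    have hPPv : P (P v) = P v := congr($(hP.isIdempotentElem) v)
    simp [hXPv, hPPv]
  rw [← h]
  exact ContinuousLinearMap.le_of_opNorm_le _ hXgap _

lemma mul_norm_sq_le_one_sub_norm_sq (hP : IsStarProjection P) (hPX : P ∘L X = P)
    (hXP : X ∘L P = P) (hXgap : ‖(1 - P) ∘L X ∘L (1 - P)‖ ≤ 1 - εC)
    {v : H} (hv : ‖v‖ = 1) :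
    εC * (2 - εC) * ‖(1 - P) v‖ ^ 2 ≤ 1 - ‖X v‖ ^ 2 := by
  have hPXv : P (X v) = P v := congr($hPX v)
  have hQ := pow_le_pow_left₀ (norm_nonneg _) (norm_one_sub_apply_le_of_gap hP hXP hXgap v) 2
  have hX := hP.norm_sq_apply_add_norm_sq_one_sub_apply (X v)
  have hv' := hP.norm_sq_apply_add_norm_sq_one_sub_apply v
  rw [hPXv] at hX
  rw [hv] at hv'
  nlinarith

lemma div_six_le_defects (hP : IsStarProjection P) (hY : ‖Y‖ ≤ 1) (hPX : P ∘L X = P)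
    (hXP : X ∘L P = P) (hεC0 : 0 < εC) (hεC1 : εC < 1) (hεA0 : 0 < εA) (hεA1 : εA < 1)
    (hXgap : ‖(1 - P) ∘L X ∘L (1 - P)‖ ≤ 1 - εC) (hYgap : ‖P ∘L Y ∘L P‖ ≤ 1 - εA)
    {v : H} (hv : ‖v‖ = 1) :
    εA / 6 ≤ (2 - εC) * ‖(1 - P) v‖ ^ 2 + (1 - ‖Y v‖ ^ 2) + ‖X v - Y v‖ ^ 2 / 2 := by
  set a := P v
  set b := (1 - P) v
  have hvab : v = a + b := by simp [a, b]
  have hab : ‖a‖ ^ 2 + ‖b‖ ^ 2 = 1 := by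
    rw [hP.norm_sq_apply_add_norm_sq_one_sub_apply, hv, one_pow]
  have hPYa : ‖P (Y a)‖ ≤ (1 - εA) * ‖a‖ := by
    have hPa : P a = a := congr($(hP.isIdempotentElem) v)
    have h := (P ∘L Y ∘L P).le_of_opNorm_le hYgap a
    simpa [hPa] using h
  have hYa := hP.norm_sq_apply_add_norm_sq_one_sub_apply (Y a)
  have hYb : ‖Y b‖ ≤ ‖b‖ := Y.le_of_opNorm_le hY b |>.trans_eq (one_mul _)
  have hdefect : ‖a‖ ^ 2 - ‖Y a‖ ^ 2 ≤ 2 * (1 - ‖Y v‖ ^ 2) + 2 * ‖b‖ ^ 2 := by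
    have h := norm_sq_sub_norm_sq_apply_sub_le hY v b
    rw [hv, show v - b = a by rw [hvab, add_sub_cancel_right]] at h
    nlinarith [norm_nonneg (Y b)]
  have hYv : Y v = Y a + Y b := by rw [hvab, map_add]
  have hdP : εA * ‖a‖ - ‖b‖ ≤ ‖X v - Y v‖ := by
    have hPD : P (X v - Y v) = a - P (Y a) - P (Y b) := by
      rw [map_sub, hYv, map_add, show P (X v) = a from congr($hPX v), sub_add_eq_sub_sub]
    calc εA * ‖a‖ - ‖b‖ ≤ ‖a‖ - ‖P (Y a)‖ - ‖P (Y b)‖ := by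
          linarith [hP.norm_apply_le (Y b)]
      _ ≤ ‖a - P (Y a) - P (Y b)‖ := by
          linarith [norm_sub_norm_le a (P (Y a)), norm_sub_norm_le (a - P (Y a)) (P (Y b))]
      _ ≤ ‖X v - Y v‖ := hPD ▸ hP.norm_apply_le _
  have hdQ : ‖(1 - P) (Y a)‖ - (2 - εC) * ‖b‖ ≤ ‖X v - Y v‖ := by
    have hQD : (1 - P) (Y a) = (1 - P) (X v) - (1 - P) (Y b) - (1 - P) (X v - Y v) := by
      rw [map_sub (1 - P) (X v), hYv, map_add]
      abel
    have hQ := hP.one_sub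
    calc ‖(1 - P) (Y a)‖ - (2 - εC) * ‖b‖
        ≤ ‖(1 - P) (Y a)‖ - ‖(1 - P) (X v)‖ - ‖(1 - P) (Y b)‖ := by
          linarith [norm_one_sub_apply_le_of_gap hP hXP hXgap v, hQ.norm_apply_le (Y b)]
      _ ≤ ‖(1 - P) (X v - Y v)‖ := by
          rw [hQD]
          linarith [norm_sub_le ((1 - P) (X v) - (1 - P) (Y b)) ((1 - P) (X v - Y v)),
            norm_sub_le ((1 - P) (X v)) ((1 - P) (Y b))]
      _ ≤ ‖X v - Y v‖ := hQ.norm_apply_le _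
  refine div_six_le_of_gap_bounds (norm_nonneg a) (norm_nonneg b) hab (by linarith) (by linarith)
    hεA0 hεA1 (norm_nonneg _) (le_add_of_nonneg_right ?_) ?_ hdP hdQ
  · nlinarith [norm_nonneg (Y v), Y.le_of_opNorm_le hY v]
  · nlinarith [pow_le_pow_left₀ (norm_nonneg _) hPYa 2, sq_nonneg ‖b‖]

lemma norm_sq_convex_comb_apply_le (hP : IsStarProjection P) (hY : ‖Y‖ ≤ 1) (hPX : P ∘L X = P)
    (hXP : X ∘L P = P) (hεC0 : 0 < εC) (hεC1 : εC < 1) (hεA0 : 0 < εA) (hεA1 : εA < 1)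
    (hXgap : ‖(1 - P) ∘L X ∘L (1 - P)‖ ≤ 1 - εC)
    (hYgap : ‖P ∘L Y ∘L P‖ ≤ 1 - εA) {p : ℝ} (hp0 : 0 < p) (hp1 : p < 1) {v : H} (hv : ‖v‖ = 1) :
    ‖(p • X + (1 - p) • Y) v‖ ^ 2 ≤ 1 - εA * min (p * εC) (1 - p) / 6 := by
  let _ := InnerProductSpace.rclikeToReal ℂ H
  have hZ : ‖(p • X + (1 - p) • Y) v‖ ^ 2 =
      p * ‖X v‖ ^ 2 + (1 - p) * ‖Y v‖ ^ 2 - p * (1 - p) * ‖X v - Y v‖ ^ 2 :=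
    norm_sq_smul_add_one_sub_smul p (X v) (Y v)
  have hgap := div_six_le_defects hP hY hPX hXP hεC0 hεC1 hεA0 hεA1 hXgap hYgap hv
  have hcomb := min_mul_mul_add_le (g₁ := 1 - ‖X v‖ ^ 2) (g₂ := 1 - ‖Y v‖ ^ 2) hp0.le hp1.le hεC1.le
    (mul_nonneg (by linarith : (0 : ℝ) ≤ 2 - εC) (sq_nonneg ‖(1 - P) v‖))
    (by linarith [mul_norm_sq_le_one_sub_norm_sq hP hPX hXP hXgap hv])
    (by nlinarith [norm_nonneg (Y v), Y.le_of_opNorm_le hY v]) (sq_nonneg ‖X v - Y v‖)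
  have ht : 0 ≤ min (p * εC) (1 - p) := le_min (by positivity) (by linarith)
  nlinarith [mul_le_mul_of_nonneg_left hgap ht]

end Gap

theorem stmt2_general {H : Type*} [NormedAddCommGroup H] [InnerProductSpace ℂ H]
    [FiniteDimensional ℂ H]
    (P X Y : H →L[ℂ] H)
    (hPproj : P ∘L P = P) (hPsa : IsSelfAdjoint P)
    (hY : ‖Y‖ ≤ 1)
    (hPX : P ∘L X = P) (hXP : X ∘L P = P)
    (εC εA : ℝ) (hεC0 : 0 < εC) (hεC1 : εC < 1) (hεA0 : 0 < εA) (hεA1 : εA < 1)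
    (hXgap : ‖(1 - P) ∘L X ∘L (1 - P)‖ ≤ 1 - εC)
    (hYgap : ‖P ∘L Y ∘L P‖ ≤ 1 - εA)
    (p : ℝ) (hp0 : 0 < p) (hp1 : p < 1) :
    ‖p • X + (1 - p) • Y‖ ≤ 1 - εA / 12 * min (p * εC) (1 - p) ∧
      1 - εA / 12 * min (p * εC) (1 - p) < 1 := by
  have hP : IsStarProjection P := ⟨hPproj, hPsa⟩
  set t := min (p * εC) (1 - p)
  have ht0 : 0 < t := lt_min (mul_pos hp0 hεC0) (by linarith)
  have ht1 : t ≤ 1 - p := min_le_right _ _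
  have hδ : εA / 12 * t < 1 := by nlinarith
  refine ⟨ContinuousLinearMap.opNorm_le_of_unit_norm (by linarith) fun v hv => ?_,
    by linarith [mul_pos (div_pos hεA0 (by norm_num : (0 : ℝ) < 12)) ht0]⟩
  have h := norm_sq_convex_comb_apply_le hP hY hPX hXP hεC0 hεC1 hεA0 hεA1 hXgap hYgap
    hp0 hp1 hv
  refine (sq_le_sq₀ (norm_nonneg _) (by linarith)).1 ?_
  nlinarith [sq_nonneg (εA / 12 * t)]

theorem stmt2 {H : Type*} [NormedAddCommGroup H] [InnerProductSpace ℂ H]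
    [FiniteDimensional ℂ H]
    (P X Y : H →L[ℂ] H)
    (hPproj : P ∘L P = P) (hPsa : IsSelfAdjoint P)
    (hX : ‖X‖ ≤ 1) (hY : ‖Y‖ ≤ 1)
    (hPX : P ∘L X = P) (hXP : X ∘L P = P)
    (εC εA : ℝ) (hεC0 : 0 < εC) (hεC1 : εC < 1) (hεA0 : 0 < εA) (hεA1 : εA < 1)
    (hXgap : ‖(1 - P) ∘L X ∘L (1 - P)‖ ≤ 1 - εC)
    (hYgap : ‖P ∘L Y ∘L P‖ ≤ 1 - εA)
    (p : ℝ) (hp0 : 0 < p) (hp1 : p < 1) :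
    ‖p • X + (1 - p) • Y‖ ≤ 1 - εA / 12 * min (p * εC) (1 - p) ∧
      1 - εA / 12 * min (p * εC) (1 - p) < 1 :=
  stmt2_general P X Y hPproj hPsa hY hPX hXP εC εA hεC0 hεC1 hεA0 hεA1 hXgap hYgap p hp0 hp1
end

section
/- Let μ denote the Möbius function of the lattice of partitions of {1,…,n} under the refinement order. For partitions Π ≤ Π' of {1,…,n}, μ(Π, Π') = (−1)^{|Π|−|Π'|} ∏_{i=1}^{|Π'|} (b_i − 1)!, where b_i is the number of blocks of Π contained in the i-th block of Π'. -/
/-!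
A left inverse of `ζ` equals every right inverse, so it suffices to check `ζ F = 1` for the
candidate `F(s, u) = ∏_c μₘ(b_c)`, where `μₘ(m) = (-1)^(m-1) (m-1)!` and `b_c` is the number of
blocks of `s` inside the block `c` of `u`. This amounts to `∑_{r₁ ≤ s ≤ r₂} F(s, r₂) = 0` for
`r₁ < r₂`, proved by a Weisner-type grouping. Pick `x₀, y₀` in one block of `r₂` but in different
blocks of `r₁`, let `A` be the `r₁`-block of `x₀`, `Q` the partition `{A, Aᶜ}`, and group the `s`
by `t = s ⊓ Q`. The fibre over `t` consists of `t` and the `k` partitions obtained by merging the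
block `A` of `t` with one of the `k` other blocks of `t` inside the `r₂`-block `c₀` of `x₀`. All of
them have the same block counts outside `c₀`, so the fibre contributes a multiple of
`μₘ(k+1) + k μₘ(k) = 0`.
-/

open scoped Classical

instance setoidFinite {n : ℕ} : Finite (Setoid (Fin n)) :=
  Finite.of_injective (fun r : Setoid (Fin n) => (⇑r : Fin n → Fin n → Prop))
    (fun _ _ h => Setoid.eq_iff_rel_eq.2 h)

/-- The number of blocks `|Π|` of the partition corresponding to `r`. -/
noncomputable def numBlocks {n : ℕ} (r : Setoid (Fin n)) : ℕ :=
  Nat.card (Quotient r)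

/-- The number of blocks of `r` contained in the block `c` of `r'` (for `r ≤ r'`):
a block `d` of `r` is contained in `c` iff some representative of `d` lies in `c`. -/
noncomputable def blocksIn {n : ℕ} (r r' : Setoid (Fin n)) (c : Quotient r') : ℕ :=
  Nat.card {d : Quotient r // ∃ x : Fin n, Quotient.mk r x = d ∧ Quotient.mk r' x = c}

open Finset

namespace Setoid

variable {α : Type*}

def factorOfLE {r s : Setoid α} (h : r ≤ s) : Quotient r → Quotient s :=
  Quot.map id fun _ _ hab => h hab

@[simp]
lemma factorOfLE_mk {r s : Setoid α} (h : r ≤ s) (x : α) :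
    factorOfLE h (Quotient.mk r x) = Quotient.mk s x := rfl

lemma factorOfLE_surjective {r s : Setoid α} (h : r ≤ s) : Function.Surjective (factorOfLE h) :=
  Quotient.ind fun x => ⟨Quotient.mk r x, rfl⟩

@[simp]
lemma factorOfLE_refl (r : Setoid α) (d : Quotient r) : factorOfLE le_rfl d = d :=
  Quotient.inductionOn d fun _ => rfl

@[simp]
lemma factorOfLE_factorOfLE {r s u : Setoid α} (h₁ : r ≤ s) (h₂ : s ≤ u) (d : Quotient r) :
    factorOfLE h₂ (factorOfLE h₁ d) = factorOfLE (h₁.trans h₂) d :=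
  Quotient.inductionOn d fun _ => rfl

def mergeClasses (t : Setoid α) (S : Set (Quotient t)) : Setoid α where
  r a b := Quotient.mk t a = Quotient.mk t b ∨ (Quotient.mk t a ∈ S ∧ Quotient.mk t b ∈ S)
  iseqv := by
    refine ⟨fun _ => Or.inl rfl, fun h => h.imp Eq.symm And.symm, ?_⟩
    rintro a b c (hab | ⟨ha, hb⟩) (hbc | ⟨hb', hc⟩)
    · exact Or.inl (hab.trans hbc)
    · exact Or.inr ⟨hab ▸ hb', hc⟩
    · exact Or.inr ⟨ha, hbc ▸ hb⟩
    · exact Or.inr ⟨ha, hc⟩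

lemma le_mergeClasses (t : Setoid α) (S : Set (Quotient t)) : t ≤ mergeClasses t S :=
  fun _ _ h => Or.inl (Quotient.sound h)

lemma factorOfLE_mergeClasses_eq_iff {t : Setoid α} {S : Set (Quotient t)} {d d' : Quotient t} :
    factorOfLE (le_mergeClasses t S) d = factorOfLE (le_mergeClasses t S) d' ↔
      d = d' ∨ (d ∈ S ∧ d' ∈ S) := by
  induction d using Quotient.inductionOn
  induction d' using Quotient.inductionOn
  exact Quotient.eq

lemma mergeClasses_pair_le_iff {t r : Setoid α} (h : t ≤ r) {c d : Quotient t} :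
    mergeClasses t {c, d} ≤ r ↔ factorOfLE h c = factorOfLE h d := by
  induction c using Quotient.inductionOn with | h x => ?_
  induction d using Quotient.inductionOn with | h y => ?_
  refine ⟨fun hle => Quotient.sound (hle (Or.inr ⟨by simp, by simp⟩)), fun hxy a b hab => ?_⟩
  have key : ∀ {z}, Quotient.mk t z ∈ ({Quotient.mk t x, Quotient.mk t y} : Set _) → r x z := by
    rintro z (hz | hz)
    · exact h (Quotient.exact hz.symm)
    · exact r.trans (Quotient.exact hxy) (h (Quotient.exact hz.symm))
  rcases hab with hab | ⟨ha, hb⟩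
  · exact h (Quotient.exact hab)
  · exact r.trans (r.symm (key ha)) (key hb)

lemma mergeClasses_pair_ne {t : Setoid α} {c e : Quotient t} (he : e ≠ c) :
    mergeClasses t {c, e} ≠ t := by
  induction c using Quotient.inductionOn with | h x => ?_
  induction e using Quotient.inductionOn with | h y => ?_
  intro h
  have hxy : mergeClasses t {Quotient.mk t x, Quotient.mk t y} x y :=
    Or.inr ⟨Set.mem_insert _ _, Set.mem_insert_of_mem _ rfl⟩
  rw [h] at hxy
  exact he (Quotient.sound hxy).symm

lemma mergeClasses_pair_injOn (t : Setoid α) (c : Quotient t) :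
    Set.InjOn (fun e => mergeClasses t {c, e}) {e | e ≠ c} := by
  intro e he e' he' h
  induction c using Quotient.inductionOn with | h x => ?_
  induction e using Quotient.inductionOn with | h y => ?_
  have hxy : mergeClasses t {Quotient.mk t x, Quotient.mk t y} x y :=
    Or.inr ⟨Set.mem_insert _ _, Set.mem_insert_of_mem _ rfl⟩
  simp only at h
  rw [h] at hxy
  rcases hxy with hxy | ⟨-, hy | hy⟩
  · exact absurd hxy.symm he
  · exact absurd hy he
  · exact hy

def twoBlocks (A : Set α) : Setoid α where
  r a b := (a ∈ A ↔ b ∈ A)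
  iseqv := ⟨fun _ => Iff.rfl, Iff.symm, Iff.trans⟩

lemma le_twoBlocks_class (t : Setoid α) (x₀ : α) : t ≤ twoBlocks {z | t x₀ z} :=
  fun _ _ hab => ⟨fun h => t.trans h hab, fun h => t.trans h (t.symm hab)⟩

section Fiber

variable {t s : Setoid α} {x₀ : α}

lemma mergeClasses_inf_twoBlocks {e : Quotient t} (he : e ≠ Quotient.mk t x₀) :
    mergeClasses t {Quotient.mk t x₀, e} ⊓ twoBlocks {z | t x₀ z} = t := by
  refine le_antisymm (fun a b hab => ?_) (le_inf (le_mergeClasses _ _) (le_twoBlocks_class t x₀))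
  obtain ⟨hab | ⟨ha, hb⟩, hq⟩ := inf_iff_and.1 hab
  · exact Quotient.exact hab
  have hq : Quotient.mk t a = Quotient.mk t x₀ ↔ Quotient.mk t b = Quotient.mk t x₀ := by
    rw [Quotient.eq, Quotient.eq, t.comm', t.comm' (x := b)]
    exact hq
  simp only [Set.mem_insert_iff, Set.mem_singleton_iff] at ha hb
  apply Quotient.exact
  rcases ha with ha | ha <;> rcases hb with hb | hb
  · exact ha.trans hb.symm
  · exact absurd (hb ▸ hq.1 ha) he
  · exact absurd (ha ▸ hq.2 hb) he
  · exact ha.trans hb.symm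

lemma eq_of_inf_twoBlocks_eq (hts : t ≤ s) (h : s ⊓ twoBlocks {z | t x₀ z} = t)
    (hcl : ∀ y, s x₀ y → t x₀ y) : s = t := by
  refine le_antisymm (fun a b hab => ?_) hts
  rw [← h]
  exact ⟨hab, fun ha => hcl b (s.trans (hts ha) hab),
    fun hb => hcl a (s.trans (hts hb) (s.symm hab))⟩

lemma eq_mergeClasses_of_inf_twoBlocks_eq (hts : t ≤ s) (h : s ⊓ twoBlocks {z | t x₀ z} = t)
    {y : α} (hy : s x₀ y) (hny : ¬ t x₀ y) :
    s = mergeClasses t {Quotient.mk t x₀, Quotient.mk t y} := by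
  have hcross : ∀ z, s x₀ z → ¬ t x₀ z → t y z := fun z hz hnz => by
    rw [← h]
    exact ⟨s.trans (s.symm hy) hz, iff_of_false hny hnz⟩
  have hmem : ∀ z, s x₀ z → Quotient.mk t z ∈ ({Quotient.mk t x₀, Quotient.mk t y} : Set _) :=
    fun z hz => by
      by_cases hz' : t x₀ z
      · exact Or.inl (Quotient.sound (t.symm hz'))
      · exact Or.inr (Quotient.sound (t.symm (hcross z hz hz')))
  refine le_antisymm (fun a b hab => ?_) ((mergeClasses_pair_le_iff hts).2 (Quotient.sound hy))
  by_cases ha : s x₀ a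
  · exact Or.inr ⟨hmem a ha, hmem b (s.trans ha hab)⟩
  · have hb : ¬ s x₀ b := fun hb => ha (s.trans hb (s.symm hab))
    refine Or.inl (Quotient.sound ?_)
    rw [← h]
    exact ⟨hab, iff_of_false (fun h => ha (hts h)) (fun h => hb (hts h))⟩

theorem inf_twoBlocks_eq_iff (hts : t ≤ s) :
    s ⊓ twoBlocks {z | t x₀ z} = t ↔
      s = t ∨ ∃ e ≠ Quotient.mk t x₀, s = mergeClasses t {Quotient.mk t x₀, e} := by
  refine ⟨fun h => ?_, ?_⟩
  · by_cases hcl : ∀ y, s x₀ y → t x₀ y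
    · exact Or.inl (eq_of_inf_twoBlocks_eq hts h hcl)
    · push Not at hcl
      obtain ⟨y, hy, hny⟩ := hcl
      exact Or.inr ⟨Quotient.mk t y, fun h => hny (t.symm (Quotient.exact h)),
        eq_mergeClasses_of_inf_twoBlocks_eq hts h hy hny⟩
  · rintro (rfl | ⟨e, he, rfl⟩)
    · exact inf_eq_left.2 (le_twoBlocks_class s x₀)
    · exact mergeClasses_inf_twoBlocks he

end Fiber

end Setoid

lemma Finset.card_filter_comp_of_injOn_compl {X Y : Type*} [Fintype X] [Fintype Y] {π : X → Y}
    (hπ : Function.Surjective π) {a b : X} (hab : a ≠ b) (hπab : π a = π b)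
    (hinj : Set.InjOn π {b}ᶜ) (p : Y → Prop) :
    #{x | p (π x)} = #{y | p y} + if p (π b) then 1 else 0 := by
  set P : Finset X := {x | p (π x)}
  have himage : (P.erase b).image π = ({y | p y} : Finset Y) := by
    ext y
    simp only [P, mem_image, mem_erase, mem_filter, mem_univ, true_and]
    refine ⟨fun ⟨x, ⟨_, hx⟩, hxy⟩ => hxy ▸ hx, fun hy => ?_⟩
    obtain ⟨x, rfl⟩ := hπ y
    by_cases hxb : x = b
    · exact ⟨a, ⟨hab, hπab ▸ hxb ▸ hy⟩, hxb ▸ hπab⟩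
    · exact ⟨x, ⟨hxb, hy⟩, rfl⟩
  have hcard : #(P.erase b) = #{y | p y} := by
    rw [← himage, card_image_of_injOn (hinj.mono fun x hx => (mem_erase.1 hx).1)]
  split_ifs with hb
  · rw [← hcard, card_erase_add_one (by simpa [P] using hb)]
  · rw [← hcard, erase_eq_of_notMem (by simpa [P] using hb), add_zero]

noncomputable def zetaMatrix (P : Type*) [Fintype P] [Preorder P] : Matrix P P ℤ :=
  Matrix.of fun a b => if a ≤ b then 1 else 0

namespace PartitionLattice

variable {n : ℕ}

noncomputable instance fintypeSetoidFin : Fintype (Setoid (Fin n)) := Fintype.ofFinite _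

open Setoid

lemma blocksIn_eq_card {r r' : Setoid (Fin n)} (h : r ≤ r') (c : Quotient r') :
    blocksIn r r' c = #{d | factorOfLE h d = c} := by
  rw [blocksIn, Nat.card_eq_fintype_card, Fintype.card_subtype]
  refine congrArg card (filter_congr fun d _ => ?_)
  induction d using Quotient.inductionOn with | h y => ?_
  refine ⟨fun ⟨x, hx, hxc⟩ => ?_, fun hy => ⟨y, rfl, hy⟩⟩
  rw [← hx, factorOfLE_mk, hxc]

lemma sum_blocksIn {r r' : Setoid (Fin n)} (h : r ≤ r') :
    ∑ c, blocksIn r r' c = numBlocks r := by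
  simp only [blocksIn_eq_card h, numBlocks, Nat.card_eq_fintype_card]
  rw [← card_univ, card_eq_sum_card_fiberwise fun d _ => mem_univ (factorOfLE h d)]

lemma one_le_blocksIn {r r' : Setoid (Fin n)} (h : r ≤ r') (c : Quotient r') :
    1 ≤ blocksIn r r' c := by
  obtain ⟨d, hd⟩ := factorOfLE_surjective h c
  rw [blocksIn_eq_card h, Nat.one_le_iff_ne_zero, Ne, card_eq_zero, ← Ne,
    ← nonempty_iff_ne_empty]
  exact ⟨d, by simpa using hd⟩

lemma blocksIn_self (r : Setoid (Fin n)) (c : Quotient r) : blocksIn r r c = 1 := by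
  simp [blocksIn_eq_card le_rfl, filter_eq']

lemma blocksIn_mergeClasses {t r : Setoid (Fin n)} (htr : t ≤ r) {x₀ : Fin n} {e : Quotient t}
    (he : e ≠ Quotient.mk t x₀) (hec : factorOfLE htr e = Quotient.mk r x₀) (c : Quotient r) :
    blocksIn t r c = blocksIn (mergeClasses t {Quotient.mk t x₀, e}) r c +
      if c = Quotient.mk r x₀ then 1 else 0 := by
  have hM : mergeClasses t {Quotient.mk t x₀, e} ≤ r := (mergeClasses_pair_le_iff htr).2 hec.symm
  have hinj : Set.InjOn (factorOfLE (le_mergeClasses t {Quotient.mk t x₀, e})) {e}ᶜ := by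
    intro d hd d' hd' h
    rcases factorOfLE_mergeClasses_eq_iff.1 h with h | ⟨hdS, hd'S⟩
    · exact h
    · simp_all
  have := card_filter_comp_of_injOn_compl (factorOfLE_surjective _) he.symm
    (factorOfLE_mergeClasses_eq_iff.2 (Or.inr ⟨by simp, by simp⟩)) hinj
    (fun y => factorOfLE hM y = c)
  simp only [factorOfLE_factorOfLE, hec] at this
  rw [blocksIn_eq_card htr, blocksIn_eq_card hM, this]
  simp [eq_comm]

def partitionMobius (m : ℕ) : ℤ := (-1) ^ (m - 1) * (m - 1).factorial

lemma partitionMobius_add_two (k : ℕ) :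
    partitionMobius (k + 2) + (k + 1) * partitionMobius (k + 1) = 0 := by
  simp only [partitionMobius, show k + 2 - 1 = k + 1 from rfl, Nat.add_sub_cancel,
    Nat.factorial_succ]
  push_cast
  ring

noncomputable def blockMobius (s u : Setoid (Fin n)) : ℤ :=
  ∏ c : Quotient u, partitionMobius (blocksIn s u c)

lemma blockMobius_self (r : Setoid (Fin n)) : blockMobius r r = 1 := by
  simp [blockMobius, blocksIn_self, partitionMobius]

lemma blockMobius_eq {s u : Setoid (Fin n)} (h : s ≤ u) :
    blockMobius s u = (-1) ^ (numBlocks s - numBlocks u) *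
      ∏ᶠ c : Quotient u, ((blocksIn s u c - 1).factorial : ℤ) := by
  have hsum : ∑ c, (blocksIn s u c - 1) = numBlocks s - numBlocks u := by
    rw [sum_tsub_distrib _ fun c _ => one_le_blocksIn h c, sum_blocksIn h, sum_const, card_univ,
      smul_eq_mul, mul_one]
    simp only [numBlocks, Nat.card_eq_fintype_card]
  rw [blockMobius, finprod_eq_prod_of_fintype, ← hsum, ← prod_pow_eq_pow_sum, ← prod_mul_distrib]
  rfl

lemma filter_inf_twoBlocks_eq {t r : Setoid (Fin n)} (htr : t ≤ r) (x₀ : Fin n) :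
    ({s | s ≤ r ∧ s ⊓ twoBlocks {z | t x₀ z} = t} : Finset _) =
      insert t (({e | e ≠ Quotient.mk t x₀ ∧ factorOfLE htr e = Quotient.mk r x₀} : Finset _).image
        fun e => mergeClasses t {Quotient.mk t x₀, e}) := by
  ext s
  simp only [mem_filter, mem_univ, true_and, mem_insert, mem_image]
  constructor
  · rintro ⟨hsr, h⟩
    rcases (inf_twoBlocks_eq_iff (h ▸ inf_le_left)).1 h with rfl | ⟨e, he, rfl⟩
    · exact Or.inl rfl
    · exact Or.inr ⟨e, ⟨he, ((mergeClasses_pair_le_iff htr).1 hsr).symm⟩, rfl⟩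
  · rintro (rfl | ⟨e, ⟨he, hec⟩, rfl⟩)
    · exact ⟨htr, inf_eq_left.2 (le_twoBlocks_class s x₀)⟩
    · exact ⟨(mergeClasses_pair_le_iff htr).2 hec.symm, mergeClasses_inf_twoBlocks he⟩

lemma blockMobius_mergeClasses {t r : Setoid (Fin n)} (htr : t ≤ r) {x₀ : Fin n} {e : Quotient t}
    (he : e ≠ Quotient.mk t x₀) (hec : factorOfLE htr e = Quotient.mk r x₀) :
    blockMobius (mergeClasses t {Quotient.mk t x₀, e}) r =
      partitionMobius (blocksIn t r (Quotient.mk r x₀) - 1) *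
        ∏ c ∈ univ.erase (Quotient.mk r x₀), partitionMobius (blocksIn t r c) := by
  have hb := blocksIn_mergeClasses htr he hec
  rw [blockMobius, ← mul_prod_erase _ _ (mem_univ (Quotient.mk r x₀)), hb, if_pos rfl,
    Nat.add_sub_cancel]
  refine congrArg _ (prod_congr rfl fun c hc => ?_)
  rw [hb c, if_neg (ne_of_mem_erase hc), add_zero]

lemma sum_blockMobius_filter_inf_twoBlocks_eq_zero {t r : Setoid (Fin n)} (htr : t ≤ r)
    {x₀ y₀ : Fin n} (hy : r x₀ y₀) (hny : ¬ t x₀ y₀) :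
    ∑ s ∈ {s | s ≤ r ∧ s ⊓ twoBlocks {z | t x₀ z} = t}, blockMobius s r = 0 := by
  set c₀ := Quotient.mk r x₀
  set E : Finset (Quotient t) := {e | e ≠ Quotient.mk t x₀ ∧ factorOfLE htr e = c₀}
  rw [filter_inf_twoBlocks_eq htr x₀, sum_insert, sum_image]
  rotate_left
  · exact fun e he e' he' =>
      mergeClasses_pair_injOn t _ (mem_filter.1 he).2.1 (mem_filter.1 he').2.1
  · simp only [mem_image, not_exists, not_and]
    exact fun e he => mergeClasses_pair_ne (mem_filter.1 he).2.1
  have hE : #E + 1 = blocksIn t r c₀ := by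
    have hx₀ : Quotient.mk t x₀ ∈ ({d | factorOfLE htr d = c₀} : Finset _) := by simp [c₀]
    rw [blocksIn_eq_card htr, ← card_erase_add_one hx₀]
    congr 2
    ext e
    simp [E]
  obtain ⟨k, hk⟩ : ∃ k, #E = k + 1 :=
    Nat.exists_eq_add_one.2 (card_pos.2 ⟨Quotient.mk t y₀, by
      simpa [E, c₀] using ⟨fun h => hny (t.symm (Quotient.exact h)), Quotient.sound (r.symm hy)⟩⟩)
  rw [sum_congr rfl fun e he => blockMobius_mergeClasses htr (mem_filter.1 he).2.1
      (mem_filter.1 he).2.2, sum_const, blockMobius, ← mul_prod_erase _ _ (mem_univ c₀), ← hE, hk,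
    nsmul_eq_mul, Nat.add_sub_cancel]
  push_cast
  linear_combination (∏ c ∈ univ.erase c₀, partitionMobius (blocksIn t r c)) *
    partitionMobius_add_two k

theorem sum_blockMobius_Icc_eq_zero {r₁ r₂ : Setoid (Fin n)} (hle : r₁ ≤ r₂) (hne : r₁ ≠ r₂) :
    ∑ s ∈ {s | r₁ ≤ s ∧ s ≤ r₂}, blockMobius s r₂ = 0 := by
  obtain ⟨x₀, y₀, hy, hny⟩ : ∃ x y, r₂ x y ∧ ¬ r₁ x y := by
    by_contra! h
    exact hne (le_antisymm hle fun a b hab => h a b hab)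
  set Q := twoBlocks {z | r₁ x₀ z}
  rw [← sum_fiberwise_of_maps_to (g := (· ⊓ Q)) (t := {t | r₁ ≤ t ∧ t ≤ r₂ ∧ t ≤ Q})
    fun s hs => by
      simp only [mem_filter, mem_univ, true_and] at hs ⊢
      exact ⟨le_inf hs.1 (le_twoBlocks_class r₁ x₀), inf_le_left.trans hs.2, inf_le_right⟩]
  refine sum_eq_zero fun t ht => ?_
  obtain ⟨hr₁t, htr₂, htQ⟩ := by simpa using ht
  have hcl : {z | t x₀ z} = {z | r₁ x₀ z} :=
    Set.ext fun z => ⟨fun h => (htQ h).1 (r₁.refl x₀), fun h => hr₁t h⟩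
  have hny' : ¬ t x₀ y₀ := fun h => hny (Set.ext_iff.1 hcl y₀ |>.1 h)
  have hfiber : ({s | r₁ ≤ s ∧ s ≤ r₂} : Finset _).filter (· ⊓ Q = t) =
      ({s | s ≤ r₂ ∧ s ⊓ twoBlocks {z | t x₀ z} = t} : Finset _) := by
    rw [filter_filter, hcl]
    exact filter_congr fun s _ => ⟨fun ⟨⟨_, hs⟩, h⟩ => ⟨hs, h⟩,
      fun ⟨hs, h⟩ => ⟨⟨hr₁t.trans (h ▸ inf_le_left), hs⟩, h⟩⟩
  rw [hfiber]
  exact sum_blockMobius_filter_inf_twoBlocks_eq_zero htr₂ hy hny'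

noncomputable def mobiusMatrix (n : ℕ) : Matrix (Setoid (Fin n)) (Setoid (Fin n)) ℤ :=
  Matrix.of fun s u => if s ≤ u then blockMobius s u else 0

theorem zetaMatrix_mul_mobiusMatrix (n : ℕ) : zetaMatrix (Setoid (Fin n)) * mobiusMatrix n = 1 := by
  ext r₁ r₂
  simp only [Matrix.mul_apply, zetaMatrix, mobiusMatrix, Matrix.of_apply, Matrix.one_apply,
    ite_mul, one_mul, zero_mul, ← ite_and]
  rw [← sum_filter]
  split_ifs with heq
  · subst heq
    have hIcc : ({s | r₁ ≤ s ∧ s ≤ r₁} : Finset _) = {r₁} := by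
      ext s
      simp [le_antisymm_iff (a := s), and_comm]
    rw [hIcc, sum_singleton, blockMobius_self]
  · by_cases hle : r₁ ≤ r₂
    · exact sum_blockMobius_Icc_eq_zero hle heq
    · refine sum_eq_zero fun s hs => absurd ((mem_filter.1 hs).2.1.trans (mem_filter.1 hs).2.2) hle

end PartitionLattice

theorem stmt8_general (n : ℕ) (mu : Setoid (Fin n) → Setoid (Fin n) → ℤ)
    (hmu₂ : ∀ r₁ r₂ : Setoid (Fin n),
      (∑ᶠ r' : Setoid (Fin n), mu r₁ r' * (if r' ≤ r₂ then 1 else 0)) =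
        if r₁ = r₂ then 1 else 0)
    (r r' : Setoid (Fin n)) (hle : r ≤ r') :
    mu r r' = (-1 : ℤ) ^ (numBlocks r - numBlocks r') *
      ∏ᶠ c : Quotient r', (Nat.factorial (blocksIn r r' c - 1) : ℤ) := by
  have hmu : Matrix.of mu * zetaMatrix (Setoid (Fin n)) = 1 := by
    ext r₁ r₂
    simpa [Matrix.mul_apply, zetaMatrix, Matrix.one_apply, finsum_eq_sum_of_fintype]
      using hmu₂ r₁ r₂
  have hmob : Matrix.of mu = PartitionLattice.mobiusMatrix n :=
    left_inv_eq_right_inv hmu (PartitionLattice.zetaMatrix_mul_mobiusMatrix n)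
  simpa [PartitionLattice.mobiusMatrix, hle, PartitionLattice.blockMobius_eq hle]
    using congrFun₂ hmob r r'

theorem stmt8 (n : ℕ) (hn : 0 < n) (mu : Setoid (Fin n) → Setoid (Fin n) → ℤ)
    (hmu₁ : ∀ r₁ r₂ : Setoid (Fin n),
      (∑ᶠ r' : Setoid (Fin n), (if r₁ ≤ r' then 1 else 0) * mu r' r₂) =
        if r₁ = r₂ then 1 else 0)
    (hmu₂ : ∀ r₁ r₂ : Setoid (Fin n),
      (∑ᶠ r' : Setoid (Fin n), mu r₁ r' * (if r' ≤ r₂ then 1 else 0)) =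
        if r₁ = r₂ then 1 else 0)
    (r r' : Setoid (Fin n)) (hle : r ≤ r') :
    mu r r' = (-1 : ℤ) ^ (numBlocks r - numBlocks r') *
      ∏ᶠ c : Quotient r', (Nat.factorial (blocksIn r r' c - 1) : ℤ) :=
  stmt8_general n mu hmu₂ r r' hle
end

section
/- Let N, k be positive integers and ω = e^{2πi/N}. For partitions Π_1, Π_2 of {1,…,2k}, the sum Σ_{m ∈ E_{Π_1}} Σ_{n ∈ E_{Π_2}} ω^{m·n}, where m·n = m_1 n_1 + ⋯ + m_k n_k − m_{k+1} n_{k+1} − ⋯ − m_{2k} n_{2k}, is a strictly positive real number. Equivalently, the matrix element ⟨E_{Π_1}| F^{⊗k,k} |E_{Π_2}⟩ = N^{−(k + (|Π_1|+|Π_2|)/2)} Σ_{m∈E_{Π_1}, n∈E_{Π_2}} ω^{m·n} is real and positive. -/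
open scoped BigOperators Classical

/-- The Fourier transform `F = N^{-1/2} ∑_{m,n=1}^N ω^{mn} |m⟩⟨n|`, `ω = e^{2πi/N}`. -/
noncomputable def Fmat (N : ℕ) : Matrix (Fin N) (Fin N) ℂ :=
  fun i j => (Real.sqrt N : ℂ)⁻¹ *
    Complex.exp (2 * Real.pi * Complex.I * (((i : ℕ) + 1) * ((j : ℕ) + 1)) / N)

/-- `F^{⊗k,k} = F^{⊗k} ⊗ (conj F)^{⊗k}` as a matrix on `(ℂ^N)^{⊗2k}`. -/
noncomputable def Fkk (N k : ℕ) : Matrix (Fin (2*k) → Fin N) (Fin (2*k) → Fin N) ℂ :=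
  fun a b => ∏ j : Fin (2*k),
    if (j : ℕ) < k then Fmat N (a j) (b j) else (starRingEnd ℂ) (Fmat N (a j) (b j))

/-- The set `E_Π` of tuples whose coordinates are equal on each block of `r`. -/
def Eset (N n : ℕ) (r : Setoid (Fin n)) : Set (Fin n → Fin N) :=
  {v | ∀ i j : Fin n, r i j → v i = v j}

/-- The unit vector `|E_Π⟩ = |E_Π|^{-1/2} ∑_{n ∈ E_Π} |n⟩`, where `|E_Π| = N^{|Π|}`. -/
noncomputable def ketE (N n : ℕ) (r : Setoid (Fin n)) : (Fin n → Fin N) → ℂ :=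
  fun v => if v ∈ Eset N n r then ((Real.sqrt ((N : ℝ) ^ numBlocks r) : ℂ))⁻¹ else 0

/-- The matrix element `⟨E_{Π₁}| F^{⊗k,k} |E_{Π₂}⟩`. -/
noncomputable def matEltE (N k : ℕ) (r₁ r₂ : Setoid (Fin (2*k))) : ℂ :=
  ∑ a : Fin (2*k) → Fin N, ∑ b : Fin (2*k) → Fin N,
    (starRingEnd ℂ) (ketE N (2*k) r₁ a) * Fkk N k a b * ketE N (2*k) r₂ b

/-- The pairing `m·n = ∑_{j≤k} m_j n_j - ∑_{j>k} m_j n_j`, with coordinates of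
`Fin N` read as the values `1,…,N`. -/
def dotp (N k : ℕ) (m n : Fin (2*k) → Fin N) : ℤ :=
  ∑ j : Fin (2*k),
    (if (j : ℕ) < k then 1 else -1) * (((m j : ℕ) + 1) : ℤ) * (((n j : ℕ) + 1) : ℤ)

/-- The exponential sum `∑_{m ∈ E_{Π₁}} ∑_{n ∈ E_{Π₂}} ω^{m·n}`, `ω = e^{2πi/N}`. -/
noncomputable def expSum (N k : ℕ) (r₁ r₂ : Setoid (Fin (2*k))) : ℂ :=
  ∑ m ∈ Finset.univ.filter (· ∈ Eset N (2*k) r₁),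
    ∑ n ∈ Finset.univ.filter (· ∈ Eset N (2*k) r₂),
      Complex.exp (2 * Real.pi * Complex.I / N) ^ (dotp N k m n)

/-!
Parametrise `E_Π` by the functions `g` from the blocks of `Π` to `{1, …, N}`. Then `m·n` is linear
in `g`, the inner sum over `n ∈ E_{Π₂}` factors over the blocks `c` of `Π₂`, and each factor is a
full sum of `N`-th roots of unity `∑_t ω^{t s_c}`, equal to `N` or `0` according as `N ∣ s_c`.
So `∑_{m,n} ω^{m·n}` is a sum of natural numbers; the term of the tuple `m = (N, …, N)` is
`N^{|Π₂|} > 0`. The matrix element is this sum times a positive real scalar.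
-/

open Finset

theorem zpow_sum₀ {ι G : Type*} [CommGroupWithZero G] {a : G} (ha : a ≠ 0) (s : Finset ι)
    (f : ι → ℤ) : a ^ (∑ i ∈ s, f i) = ∏ i ∈ s, a ^ f i := by
  induction s using Finset.cons_induction with
  | empty => simp
  | cons i s hi ih => rw [sum_cons, prod_cons, zpow_add₀ ha, ih]

theorem sum_Eset_eq_sum_quotient {M : Type*} [AddCommMonoid M] (N n : ℕ) (r : Setoid (Fin n))
    (f : (Fin n → Fin N) → M) :
    ∑ v ∈ univ.filter (· ∈ Eset N n r), f v = ∑ g : Quotient r → Fin N, f (fun i => g ⟦i⟧) := by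
  rw [sum_subtype (p := fun v => r ≤ Setoid.ker v) _ fun v => by
    simpa using ⟨fun h _ _ hr => h _ _ hr, fun h _ _ hr => h hr⟩]
  exact ((Setoid.liftEquiv r).symm.sum_comp fun v => f v.1).symm

namespace IsPrimitiveRoot

variable {K : Type*} [Field K] {ζ : K} {N : ℕ}

theorem sum_fin_zpow_succ_mul (hζ : IsPrimitiveRoot ζ N) (s : ℤ) :
    ∑ t : Fin N, ζ ^ (((t : ℕ) + 1 : ℤ) * s) = if (N : ℤ) ∣ s then (N : K) else 0 := by
  have hpow (t : Fin N) : ζ ^ (((t : ℕ) + 1 : ℤ) * s) = (ζ ^ s) ^ ((t : ℕ) + 1) := by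
    rw [mul_comm, zpow_mul]; norm_cast
  simp only [hpow]
  split_ifs with hs
  · simp [(hζ.zpow_eq_one_iff_dvd s).2 hs]
  · have hne : ζ ^ s ≠ 1 := mt (hζ.zpow_eq_one_iff_dvd s).1 hs
    have hN : (ζ ^ s) ^ N = 1 := by
      rw [← zpow_natCast, ← zpow_mul, mul_comm, zpow_mul, zpow_natCast, hζ.pow_eq_one, one_zpow]
    simp only [pow_succ', ← mul_sum]
    rw [Fin.sum_univ_eq_sum_range ((ζ ^ s) ^ ·), geom_sum_eq hne, hN, sub_self, zero_div, mul_zero]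

theorem sum_quotient_zpow {ι : Type*} [Fintype ι] (hζ : IsPrimitiveRoot ζ N) (hN : N ≠ 0)
    (r : Setoid ι) (a : ι → ℤ) :
    ∑ g : Quotient r → Fin N, ζ ^ (∑ i, a i * ((g ⟦i⟧ : ℕ) + 1 : ℤ)) =
      ∏ c : Quotient r, if (N : ℤ) ∣ ∑ i with ⟦i⟧ = c, a i then (N : K) else 0 := by
  have hblocks (g : Quotient r → Fin N) : ∑ i, a i * ((g ⟦i⟧ : ℕ) + 1 : ℤ) =
      ∑ c, ((g c : ℕ) + 1 : ℤ) * ∑ i with ⟦i⟧ = c, a i := by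
    rw [← sum_fiberwise univ (fun i => (⟦i⟧ : Quotient r))]
    refine sum_congr rfl fun c _ => ?_
    rw [mul_sum]
    refine sum_congr rfl fun i hi => ?_
    rw [(mem_filter.1 hi).2, mul_comm]
  simp only [hblocks, zpow_sum₀ (hζ.ne_zero hN), ← hζ.sum_fin_zpow_succ_mul]
  exact (Fintype.prod_sum fun c (t : Fin N) => ζ ^ (((t : ℕ) + 1 : ℤ) * _)).symm

theorem sum_Eset_zpow {n : ℕ} (hζ : IsPrimitiveRoot ζ N) (hN : N ≠ 0) (r : Setoid (Fin n))
    (a : Fin n → ℤ) :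
    ∑ v ∈ univ.filter (· ∈ Eset N n r), ζ ^ (∑ i, a i * ((v i : ℕ) + 1 : ℤ)) =
      ((∏ c : Quotient r, if (N : ℤ) ∣ ∑ i with ⟦i⟧ = c, a i then N else 0 : ℕ) : K) := by
  rw [sum_Eset_eq_sum_quotient, hζ.sum_quotient_zpow hN]
  push_cast
  rfl

end IsPrimitiveRoot

def signedCoord (N k : ℕ) (m : Fin (2 * k) → Fin N) (j : Fin (2 * k)) : ℤ :=
  (if (j : ℕ) < k then 1 else -1) * ((m j : ℕ) + 1 : ℤ)

theorem dotp_eq_sum_signedCoord_mul (N k : ℕ) (m n : Fin (2 * k) → Fin N) :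
    dotp N k m n = ∑ j, signedCoord N k m j * ((n j : ℕ) + 1 : ℤ) :=
  rfl

theorem exists_expSum_eq_natCast (N k : ℕ) (hN : 0 < N) (r₁ r₂ : Setoid (Fin (2 * k))) :
    ∃ c : ℕ, 0 < c ∧ expSum N k r₁ r₂ = c := by
  have hζ := Complex.isPrimitiveRoot_exp N hN.ne'
  refine ⟨∑ m ∈ univ.filter (· ∈ Eset N (2 * k) r₁), ∏ c : Quotient r₂,
      if (N : ℤ) ∣ ∑ j with ⟦j⟧ = c, signedCoord N k m j then N else 0, ?_, ?_⟩
  · -- the tuple with all coordinates equal to `N` contributes a nonzero term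
    let top : Fin (2 * k) → Fin N := fun _ => ⟨N - 1, by omega⟩
    have htop : top ∈ univ.filter (· ∈ Eset N (2 * k) r₁) :=
      mem_filter.2 ⟨mem_univ _, fun _ _ _ => rfl⟩
    refine sum_pos' (fun _ _ => Nat.zero_le _) ⟨top, htop, prod_pos fun c _ => ?_⟩
    rw [if_pos (dvd_sum fun j _ => ?_)]
    · exact hN
    · have hsucc : ((N - 1 : ℕ) : ℤ) + 1 = N := by omega
      simp only [signedCoord, top, hsucc, dvd_mul_left]
  · simp only [expSum, dotp_eq_sum_signedCoord_mul, hζ.sum_Eset_zpow hN.ne', Nat.cast_sum]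

section

open Complex

theorem Fmat_eq_inv_sqrt_mul_zpow (N : ℕ) (x y : Fin N) :
    Fmat N x y = (Real.sqrt N : ℂ)⁻¹ *
      exp (2 * Real.pi * I / N) ^ (((x : ℕ) + 1 : ℤ) * ((y : ℕ) + 1 : ℤ)) := by
  rw [Fmat, ← exp_int_mul]
  push_cast
  ring_nf

theorem conj_exp_two_pi_I_div (N : ℕ) :
    starRingEnd ℂ (exp (2 * Real.pi * I / N)) = (exp (2 * Real.pi * I / N))⁻¹ := by
  rw [← exp_conj, ← exp_neg, map_div₀]
  simp only [map_mul, map_ofNat, conj_ofReal, conj_I, map_natCast]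
  ring_nf

theorem Fkk_eq_ofReal_mul_zpow_dotp (N k : ℕ) (a b : Fin (2 * k) → Fin N) :
    Fkk N k a b = (((N : ℝ)⁻¹ ^ k : ℝ) : ℂ) * exp (2 * Real.pi * I / N) ^ dotp N k a b := by
  set ω := exp (2 * Real.pi * I / N)
  have hω : ω ≠ 0 := exp_ne_zero _
  have hfactor (j : Fin (2 * k)) :
      (if (j : ℕ) < k then Fmat N (a j) (b j) else starRingEnd ℂ (Fmat N (a j) (b j))) =
        (Real.sqrt N : ℂ)⁻¹ * ω ^ ((if (j : ℕ) < k then 1 else -1) *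
          ((a j : ℕ) + 1 : ℤ) * ((b j : ℕ) + 1 : ℤ)) := by
    split_ifs
    · rw [Fmat_eq_inv_sqrt_mul_zpow, one_mul]
    · rw [Fmat_eq_inv_sqrt_mul_zpow, map_mul, map_inv₀, conj_ofReal, map_zpow₀,
        conj_exp_two_pi_I_div, inv_zpow', neg_one_mul, neg_mul]
  have hscale : ((Real.sqrt N : ℂ)⁻¹) ^ (2 * k) = (((N : ℝ)⁻¹ ^ k : ℝ) : ℂ) := by
    rw [pow_mul, inv_pow, ← ofReal_pow, Real.sq_sqrt N.cast_nonneg]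
    push_cast
    rfl
  rw [Fkk, prod_congr rfl fun j _ => hfactor j, prod_mul_distrib, prod_const, card_univ,
    Fintype.card_fin, hscale, dotp, zpow_sum₀ hω]

end

theorem matEltE_eq_ofReal_mul_expSum (N k : ℕ) (r₁ r₂ : Setoid (Fin (2 * k))) :
    matEltE N k r₁ r₂ = (((Real.sqrt ((N : ℝ) ^ numBlocks r₁))⁻¹ *
      (Real.sqrt ((N : ℝ) ^ numBlocks r₂))⁻¹ * (N : ℝ)⁻¹ ^ k : ℝ) : ℂ) * expSum N k r₁ r₂ := by
  simp only [matEltE, expSum, Finset.sum_filter, Finset.mul_sum]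
  refine sum_congr rfl fun a _ => ?_
  by_cases ha : a ∈ Eset N (2 * k) r₁
  · rw [if_pos ha, Finset.mul_sum]
    refine sum_congr rfl fun b _ => ?_
    by_cases hb : b ∈ Eset N (2 * k) r₂
    · simp only [ketE, ha, hb, if_true, map_inv₀, Complex.conj_ofReal,
        Fkk_eq_ofReal_mul_zpow_dotp]
      push_cast
      ring
    · simp [ketE, hb]
  · simp [ketE, ha]

theorem stmt12_general (N k : ℕ) (hN : 0 < N) (r₁ r₂ : Setoid (Fin (2*k))) :
    ((expSum N k r₁ r₂).im = 0 ∧ 0 < (expSum N k r₁ r₂).re) ∧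
    ((matEltE N k r₁ r₂).im = 0 ∧ 0 < (matEltE N k r₁ r₂).re) := by
  have h_ofReal {x : ℝ} (hx : 0 < x) : (x : ℂ).im = 0 ∧ 0 < (x : ℂ).re :=
    ⟨Complex.ofReal_im x, by rwa [Complex.ofReal_re]⟩
  obtain ⟨c, hc, hsum⟩ := exists_expSum_eq_natCast N k hN r₁ r₂
  have hc' : (0 : ℝ) < c := Nat.cast_pos.2 hc
  have hscale : 0 < (Real.sqrt ((N : ℝ) ^ numBlocks r₁))⁻¹ *
      (Real.sqrt ((N : ℝ) ^ numBlocks r₂))⁻¹ * (N : ℝ)⁻¹ ^ k := by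
    have : (0 : ℝ) < N := Nat.cast_pos.2 hN
    positivity
  rw [matEltE_eq_ofReal_mul_expSum, hsum, ← Complex.ofReal_natCast, ← Complex.ofReal_mul]
  exact ⟨h_ofReal hc', h_ofReal (mul_pos hscale hc')⟩

theorem stmt12 (N k : ℕ) (hN : 0 < N) (hk : 0 < k) (r₁ r₂ : Setoid (Fin (2*k))) :
    ((expSum N k r₁ r₂).im = 0 ∧ 0 < (expSum N k r₁ r₂).re) ∧
    ((matEltE N k r₁ r₂).im = 0 ∧ 0 < (matEltE N k r₁ r₂).re) :=
  stmt12_general N k hN r₁ r₂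
end

section
/- Let N, k be positive integers and ω = e^{2πi/N}. Let Π_1, Π_2, Π_1', Π_2' be partitions of {1,…,2k} with Π_1' ≤ Π_1 and Π_2' ≤ Π_2 in the refinement order. Then √(|E_{Π_1}|·|E_{Π_2}|) · ⟨E_{Π_1}| F^{⊗k,k} |E_{Π_2}⟩ ≤ √(|E_{Π_1'}|·|E_{Π_2'}|) · ⟨E_{Π_1'}| F^{⊗k,k} |E_{Π_2'}⟩; equivalently, Σ_{m∈E_{Π_1}, n∈E_{Π_2}} ω^{m·n} ≤ Σ_{m∈E_{Π_1'}, n∈E_{Π_2'}} ω^{m·n} (both sums being positive reals), where m·n = Σ_{j=1}^k m_j n_j − Σ_{j=k+1}^{2k} m_j n_j. -/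
/-!
Parametrising `E_Π` by functions from the blocks of `Π` to `ZMod N` turns the exponential sum
into `∑_{g₁, g₂} e(B(g₁, g₂))` for the bilinear form `B(g₁, g₂) = ∑_j ±g₁[j] g₂[j]`; summing out
`g₂` leaves `N^{|Π₂|} · #ker (g₁ ↦ B(g₁, ·))`. Refining `Π₂` to `Π₂'` factors the kernel map for
`Π₂` as the one for `Π₂'` followed by the surjection that adds up the values on the blocks of
`Π₂'` inside each block of `Π₂`, and `|C| · |ker (g ∘ f)| ≤ |B| · |ker f|` whenever
`f : A →+ B` and `g : B →+ C` is surjective. The sum is symmetric in the two partitions, and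
the normalised matrix element is the same sum divided by `N^k`.
-/

open scoped BigOperators Classical

open Finset

lemma AddMonoidHom.card_ker_comp_le {A B C : Type*} [AddGroup A] [AddGroup B] [AddGroup C]
    [Finite A] [Finite B] (f : A →+ B) (g : B →+ C) :
    Nat.card (g.comp f).ker ≤ Nat.card f.ker * Nat.card g.ker := by
  let ρ : (g.comp f).ker →+ g.ker :=
    (f.comp (g.comp f).ker.subtype).codRestrict g.ker fun x => x.2
  have hker : Nat.card ρ.ker ≤ Nat.card f.ker :=
    Nat.card_le_card_of_injective (fun x => ⟨x.1.1, congrArg Subtype.val x.2⟩)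
      fun x y hxy => by ext; simpa using congrArg Subtype.val hxy
  calc Nat.card (g.comp f).ker = Nat.card ρ.ker * Nat.card ρ.range := by
        rw [← AddSubgroup.index_ker, AddSubgroup.card_mul_index]
    _ ≤ Nat.card f.ker * Nat.card g.ker :=
        Nat.mul_le_mul hker (AddSubgroup.card_le_card_addGroup _)

lemma AddMonoidHom.card_mul_card_ker_comp_le {A B C : Type*} [AddGroup A] [AddGroup B]
    [AddGroup C] [Finite A] [Finite B] (f : A →+ B) {g : B →+ C} (hg : Function.Surjective g) :
    Nat.card C * Nat.card (g.comp f).ker ≤ Nat.card B * Nat.card f.ker := by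
  have hB : Nat.card g.ker * Nat.card C = Nat.card B := by
    rw [← AddSubgroup.card_top (G := C), ← AddMonoidHom.range_eq_top.mpr hg,
      ← AddSubgroup.index_ker, AddSubgroup.card_mul_index]
  calc Nat.card C * Nat.card (g.comp f).ker
      ≤ Nat.card C * (Nat.card f.ker * Nat.card g.ker) :=
        Nat.mul_le_mul_left _ (AddMonoidHom.card_ker_comp_le f g)
    _ = Nat.card B * Nat.card f.ker := by rw [← hB]; ring

section fiberSum

variable {ι κ μ M : Type*} [Fintype ι] [DecidableEq κ] [AddCommMonoid M]

def fiberSum (p : ι → κ) : (ι → M) →+ (κ → M) where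
  toFun f := ∑ i, Pi.single (p i) (f i)
  map_zero' := by simp
  map_add' f g := by simp [Pi.single_add, sum_add_distrib]

lemma fiberSum_single [DecidableEq ι] (p : ι → κ) (i : ι) (x : M) :
    fiberSum p (Pi.single i x) = Pi.single (p i) x := by
  simp [fiberSum, Pi.single_apply, apply_ite (Pi.single _)]

lemma fiberSum_comp [Fintype κ] [DecidableEq μ] (q : κ → μ) (p : ι → κ) :
    fiberSum (M := M) (q ∘ p) = (fiberSum q).comp (fiberSum p) := by
  classical
  refine AddMonoidHom.functions_ext _ _ _ fun i x => ?_
  simp [fiberSum_single]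

lemma fiberSum_surjective [Fintype κ] [DecidableEq μ] [Fintype μ] {q : κ → μ}
    (hq : q.Surjective) :
    Function.Surjective (fiberSum (M := M) q) := by
  classical
  intro g
  refine ⟨∑ c, Pi.single (Function.surjInv hq c) (g c), ?_⟩
  simp [map_sum, fiberSum_single, Function.surjInv_eq hq, Finset.univ_sum_single]

lemma fiberSum_dotProduct {R : Type*} [CommSemiring R] [Fintype κ] (p : ι → κ) (f : ι → R)
    (g : κ → R) : fiberSum p f ⬝ᵥ g = ∑ i, f i * g (p i) := by
  simp only [dotProduct, fiberSum, AddMonoidHom.coe_mk, ZeroHom.coe_mk, Finset.sum_apply,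
    Pi.single_apply, sum_mul, ite_mul]
  rw [sum_comm]
  simp

end fiberSum

lemma AddChar.map_sum_eq_prod {A M ι : Type*} [AddCommMonoid A] [CommMonoid M]
    (ψ : AddChar A M) (s : Finset ι) (f : ι → A) :
    ψ (∑ i ∈ s, f i) = ∏ i ∈ s, ψ (f i) := by
  classical
  induction s using Finset.induction_on with
  | empty => simp
  | insert i s hi ih => rw [sum_insert hi, prod_insert hi, map_add_eq_mul, ih]

lemma AddChar.sum_apply_dotProduct {R R' κ : Type*} [CommRing R] [Fintype R] [DecidableEq R]
    [CommRing R'] [IsDomain R'] [Fintype κ] [DecidableEq κ] {ψ : AddChar R R'}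
    (hψ : ψ.IsPrimitive) (x : κ → R) :
    ∑ y : κ → R, ψ (x ⬝ᵥ y) = if x = 0 then (Fintype.card R : R') ^ Fintype.card κ else 0 := by
  simp_rw [dotProduct, AddChar.map_sum_eq_prod, mul_comm (x _)]
  rw [← Fintype.prod_sum (fun c t => ψ (t * x c))]
  simp_rw [AddChar.sum_mulShift _ hψ]
  simp_rw [Nat.cast_ite, Nat.cast_zero]
  rw [Fintype.prod_ite_zero]
  simp [funext_iff]

section pairingMap

variable {R R' ι κ₁ κ₂ μ : Type*} [CommRing R] [Fintype ι] [DecidableEq κ₂]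

def pairingMap (ε : ι → R) (p₁ : ι → κ₁) (p₂ : ι → κ₂) : (κ₁ → R) →+ (κ₂ → R) :=
  (fiberSum p₂).comp <|
    AddMonoidHom.mk' (fun g i => ε i * g (p₁ i)) fun g h => by ext; simp [mul_add]

lemma pairingMap_dotProduct [Fintype κ₂] (ε : ι → R) (p₁ : ι → κ₁) (p₂ : ι → κ₂) (g₁ : κ₁ → R)
    (g₂ : κ₂ → R) : pairingMap ε p₁ p₂ g₁ ⬝ᵥ g₂ = ∑ i, ε i * g₁ (p₁ i) * g₂ (p₂ i) :=
  fiberSum_dotProduct _ _ _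

lemma pairingMap_comp [Fintype κ₂] [DecidableEq μ] (ε : ι → R) (p₁ : ι → κ₁) (q : κ₂ → μ)
    (p₂ : ι → κ₂) : pairingMap ε p₁ (q ∘ p₂) = (fiberSum q).comp (pairingMap ε p₁ p₂) := by
  rw [pairingMap, pairingMap, fiberSum_comp]
  rfl

variable [Fintype R] [DecidableEq R] [Fintype κ₁] [Fintype κ₂]

lemma sum_sum_addChar_eq_card_ker [DecidableEq κ₁] [CommRing R'] [IsDomain R']
    {ψ : AddChar R R'} (hψ : ψ.IsPrimitive) (ε : ι → R) (p₁ : ι → κ₁) (p₂ : ι → κ₂) :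
    ∑ g₁ : κ₁ → R, ∑ g₂ : κ₂ → R, ψ (∑ i, ε i * g₁ (p₁ i) * g₂ (p₂ i)) =
      ((Fintype.card R ^ Fintype.card κ₂ * Nat.card (pairingMap ε p₁ p₂).ker : ℕ) : R') := by
  simp_rw [← pairingMap_dotProduct, AddChar.sum_apply_dotProduct hψ]
  rw [sum_ite, sum_const_zero, add_zero, sum_const, nsmul_eq_mul, mul_comm]
  push_cast
  congr 2
  simp [Nat.card_eq_fintype_card, Fintype.card_subtype, AddMonoidHom.mem_ker]

lemma card_pow_mul_card_ker_pairingMap_comp_le [Fintype μ] [DecidableEq μ] {q : κ₂ → μ}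
    (hq : q.Surjective) (ε : ι → R) (p₁ : ι → κ₁) (p₂ : ι → κ₂) :
    Fintype.card R ^ Fintype.card μ * Nat.card (pairingMap ε p₁ (q ∘ p₂)).ker ≤
      Fintype.card R ^ Fintype.card κ₂ * Nat.card (pairingMap ε p₁ p₂).ker := by
  simpa [pairingMap_comp, Nat.card_fun, Nat.card_eq_fintype_card] using
    AddMonoidHom.card_mul_card_ker_comp_le (pairingMap ε p₁ p₂) (fiberSum_surjective (M := R) hq)

end pairingMap

section ExpSum

variable (N : ℕ) {n k : ℕ}

lemma expSum_comm (r₁ r₂ : Setoid (Fin (2 * k))) : expSum N k r₁ r₂ = expSum N k r₂ r₁ := by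
  rw [expSum, expSum, sum_comm]
  refine sum_congr rfl fun n _ => sum_congr rfl fun m _ => ?_
  simp only [dotp, mul_right_comm _ (((m _ : ℕ) : ℤ) + 1)]

variable [NeZero N]

lemma natCast_val_add_one_bijective :
    Function.Bijective fun x : Fin N => ((x : ℕ) : ZMod N) + 1 := by
  refine (Fintype.bijective_iff_injective_and_card _).mpr ⟨fun x y hxy => ?_, by simp⟩
  have := congrArg ZMod.val (add_right_cancel hxy)
  simp only [ZMod.val_natCast, Nat.mod_eq_of_lt x.isLt, Nat.mod_eq_of_lt y.isLt] at this
  exact Fin.ext this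

-- `dotp` reads the coordinates `0, …, N - 1` of `Fin N` as `1, …, N`.
noncomputable def shiftEquiv : Fin N ≃ ZMod N := .ofBijective _ (natCast_val_add_one_bijective N)

lemma sum_mem_Eset {M : Type*} [AddCommMonoid M] (r : Setoid (Fin n)) (F : (Fin n → Fin N) → M) :
    ∑ m ∈ univ.filter (· ∈ Eset N n r), F m =
      ∑ g : Quotient r → ZMod N, F ((shiftEquiv N).symm ∘ g ∘ Quotient.mk r) := by
  refine sum_nbij' (fun m c => shiftEquiv N (m c.out))
    (fun g => (shiftEquiv N).symm ∘ g ∘ Quotient.mk r) (fun _ _ => mem_univ _) (fun g _ => ?_)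
    (fun m hm => ?_) (fun g _ => ?_) (fun m hm => ?_)
  · simp only [mem_filter, mem_univ, true_and]
    intro i j hij
    simp [Quotient.sound hij]
  · funext x
    simp [(mem_filter.mp hm).2 _ _ (Quotient.mk_out x)]
  · funext c
    simp
  · congr 1
    funext x
    simp [(mem_filter.mp hm).2 _ _ (Quotient.mk_out x)]

def dotpSign (k : ℕ) (j : Fin (2 * k)) : ZMod N := if (j : ℕ) < k then 1 else -1

lemma intCast_dotp (m n : Fin (2 * k) → Fin N) :
    (dotp N k m n : ZMod N) = ∑ j, dotpSign N k j * shiftEquiv N (m j) * shiftEquiv N (n j) := by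
  simp only [dotp, dotpSign, shiftEquiv, Equiv.ofBijective_apply]
  push_cast
  refine sum_congr rfl fun j _ => ?_
  split_ifs <;> simp

lemma cexp_zpow_eq_stdAddChar (z : ℤ) :
    Complex.exp (2 * Real.pi * Complex.I / N) ^ z = ZMod.stdAddChar (z : ZMod N) := by
  rw [ZMod.stdAddChar_coe, ← Complex.exp_int_mul]
  ring_nf

lemma expSum_eq_sum_stdAddChar (r₁ r₂ : Setoid (Fin (2 * k))) :
    expSum N k r₁ r₂ = ∑ g₁ : Quotient r₁ → ZMod N, ∑ g₂ : Quotient r₂ → ZMod N,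
      ZMod.stdAddChar (∑ j, dotpSign N k j * g₁ (Quotient.mk r₁ j) * g₂ (Quotient.mk r₂ j)) := by
  simp_rw [expSum, sum_mem_Eset, cexp_zpow_eq_stdAddChar, intCast_dotp]
  simp

lemma expSum_eq_card_ker (r₁ r₂ : Setoid (Fin (2 * k))) :
    expSum N k r₁ r₂ = ((N ^ Fintype.card (Quotient r₂) *
      Nat.card (pairingMap (dotpSign N k) (Quotient.mk r₁) (Quotient.mk r₂)).ker : ℕ) : ℂ) := by
  rw [expSum_eq_sum_stdAddChar]
  simpa only [ZMod.card] using sum_sum_addChar_eq_card_ker (ZMod.isPrimitive_stdAddChar N)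
    (dotpSign N k) (Quotient.mk r₁) (Quotient.mk r₂)

lemma expSum_re_le_of_le_right (r₁ : Setoid (Fin (2 * k))) {r₂ r₂' : Setoid (Fin (2 * k))}
    (h : r₂' ≤ r₂) : (expSum N k r₁ r₂).re ≤ (expSum N k r₁ r₂').re := by
  simp only [expSum_eq_card_ker, Complex.natCast_re, Nat.cast_le]
  have hq : (Setoid.map_of_le h).Surjective := Quotient.ind fun j => ⟨Quotient.mk r₂' j, rfl⟩
  have hcomp : Setoid.map_of_le h ∘ Quotient.mk r₂' = Quotient.mk r₂ := rfl
  simpa only [ZMod.card, hcomp] using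
    card_pow_mul_card_ker_pairingMap_comp_le hq (dotpSign N k) (Quotient.mk r₁) (Quotient.mk r₂')

end ExpSum

section MatrixElement

variable (N : ℕ) [NeZero N] {k : ℕ}

lemma Fmat_eq (i j : Fin N) :
    Fmat N i j = (Real.sqrt N : ℂ)⁻¹ * ZMod.stdAddChar (shiftEquiv N i * shiftEquiv N j) := by
  have h : shiftEquiv N i * shiftEquiv N j = ((((i : ℕ) + 1) * ((j : ℕ) + 1) : ℤ) : ZMod N) := by
    simp [shiftEquiv]
  rw [Fmat, h, ZMod.stdAddChar_coe]
  push_cast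
  ring_nf

lemma Fkk_eq (a b : Fin (2 * k) → Fin N) :
    Fkk N k a b = ((N : ℂ) ^ k)⁻¹ * ZMod.stdAddChar (dotp N k a b : ZMod N) := by
  have hnorm : ((N : ℂ) ^ k)⁻¹ = ∏ _j : Fin (2 * k), (Real.sqrt N : ℂ)⁻¹ := by
    rw [prod_const, card_univ, Fintype.card_fin, inv_pow, pow_mul, ← Complex.ofReal_pow,
      Real.sq_sqrt (Nat.cast_nonneg N), Complex.ofReal_natCast]
  rw [intCast_dotp, AddChar.map_sum_eq_prod, hnorm, ← prod_mul_distrib, Fkk]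
  refine prod_congr rfl fun j _ => ?_
  split_ifs with hj <;> simp [dotpSign, hj, Fmat_eq, ← AddChar.map_neg_eq_conj]

lemma matEltE_eq (r₁ r₂ : Setoid (Fin (2 * k))) :
    matEltE N k r₁ r₂ =
      ((Real.sqrt ((N : ℝ) ^ numBlocks r₁ * (N : ℝ) ^ numBlocks r₂) * N ^ k)⁻¹ : ℝ) *
        expSum N k r₁ r₂ := by
  rw [Real.sqrt_mul (by positivity), matEltE, expSum, sum_filter, mul_sum]
  refine sum_congr rfl fun a _ => ?_
  by_cases ha : a ∈ Eset N (2 * k) r₁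
  · rw [if_pos ha, sum_filter, mul_sum]
    refine sum_congr rfl fun b _ => ?_
    simp only [ketE, if_pos ha, Fkk_eq, cexp_zpow_eq_stdAddChar]
    split_ifs
    · push_cast
      simp only [map_inv₀, Complex.conj_ofReal]
      ring
    · simp
  · simp [ketE, ha]

lemma sqrt_mul_re_matEltE (r₁ r₂ : Setoid (Fin (2 * k))) :
    Real.sqrt ((N : ℝ) ^ numBlocks r₁ * (N : ℝ) ^ numBlocks r₂) * (matEltE N k r₁ r₂).re =
      (expSum N k r₁ r₂).re / N ^ k := by
  rw [matEltE_eq, Complex.re_ofReal_mul]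
  have : Real.sqrt ((N : ℝ) ^ numBlocks r₁ * (N : ℝ) ^ numBlocks r₂) ≠ 0 := by
    have := NeZero.pos N
    positivity
  field_simp

end MatrixElement

/- All the matrix elements `⟨E_Π|F^{⊗k,k}|E_Π'⟩` are real, so the inequalities are stated for
their real parts. -/
theorem stmt13_general (N k : ℕ) (hN : 0 < N)
    (r₁ r₂ r₁' r₂' : Setoid (Fin (2*k))) (h₁ : r₁' ≤ r₁) (h₂ : r₂' ≤ r₂) :
    Real.sqrt ((N : ℝ) ^ numBlocks r₁ * (N : ℝ) ^ numBlocks r₂) *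
        (matEltE N k r₁ r₂).re ≤
      Real.sqrt ((N : ℝ) ^ numBlocks r₁' * (N : ℝ) ^ numBlocks r₂') *
        (matEltE N k r₁' r₂').re ∧
    (expSum N k r₁ r₂).re ≤ (expSum N k r₁' r₂').re := by
  have : NeZero N := ⟨hN.ne'⟩
  have hexp : (expSum N k r₁ r₂).re ≤ (expSum N k r₁' r₂').re := by
    calc (expSum N k r₁ r₂).re ≤ (expSum N k r₁ r₂').re := expSum_re_le_of_le_right N r₁ h₂
      _ = (expSum N k r₂' r₁).re := by rw [expSum_comm]
      _ ≤ (expSum N k r₂' r₁').re := expSum_re_le_of_le_right N r₂' h₁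
      _ = (expSum N k r₁' r₂').re := by rw [expSum_comm]
  refine ⟨?_, hexp⟩
  rw [sqrt_mul_re_matEltE, sqrt_mul_re_matEltE]
  gcongr

theorem stmt13 (N k : ℕ) (hN : 0 < N) (hk : 0 < k)
    (r₁ r₂ r₁' r₂' : Setoid (Fin (2*k))) (h₁ : r₁' ≤ r₁) (h₂ : r₂' ≤ r₂) :
    Real.sqrt ((N : ℝ) ^ numBlocks r₁ * (N : ℝ) ^ numBlocks r₂) *
        (matEltE N k r₁ r₂).re ≤
      Real.sqrt ((N : ℝ) ^ numBlocks r₁' * (N : ℝ) ^ numBlocks r₂') *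
        (matEltE N k r₁' r₂').re ∧
    (expSum N k r₁ r₂).re ≤ (expSum N k r₁' r₂').re :=
  stmt13_general N k hN r₁ r₂ r₁' r₂' h₁ h₂
end

section
/- Let k be a positive integer and let Π_1, Π_2 be partitions of {1,…,2k}. Define the bilinear pairing m·n = Σ_{j=1}^k m_j n_j − Σ_{j=k+1}^{2k} m_j n_j for integer tuples m, n ∈ ℤ^{2k}. Then the following are equivalent: (i) m·n = 0 for all m, n ∈ ℤ^{2k} such that m_i = m_j whenever i, j lie in the same block of Π_1 and n_i = n_j whenever i, j lie in the same block of Π_2; (ii) there exists a permutation π ∈ S_k such that P(π) ≤ Π_1 and P(π) ≤ Π_2 in the refinement order (equivalently P(π) ≤ Π_1 ∧ Π_2, the meet of Π_1 and Π_2 in the partition lattice). -/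
open scoped BigOperators

/-- The partition `P(π) = {{1,k+π(1)}, …, {k,k+π(k)}}` of `{1,…,2k}`, as the kernel
of the map sending `i ↦ i` for `i ≤ k` and `i ↦ π⁻¹(i-k)` for `i > k`. -/
def Pperm (k : ℕ) (π : Equiv.Perm (Fin k)) : Setoid (Fin (2*k)) :=
  Setoid.ker (fun i : Fin (2*k) =>
    if h : (i : ℕ) < k then (⟨i, h⟩ : Fin k)
    else π.symm ⟨(i : ℕ) - k, by have := i.isLt; omega⟩)

/-- The bilinear pairing `m·n = ∑_{j≤k} m_j n_j - ∑_{j>k} m_j n_j` on `ℤ^{2k}`. -/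
def dotZ (k : ℕ) (m n : Fin (2*k) → ℤ) : ℤ :=
  ∑ j : Fin (2*k), (if (j : ℕ) < k then 1 else -1) * m j * n j

theorem stmt17 (k : ℕ) (hk : 0 < k) (r₁ r₂ : Setoid (Fin (2*k))) :
    (∀ m n : Fin (2*k) → ℤ,
        (∀ i j : Fin (2*k), r₁ i j → m i = m j) →
        (∀ i j : Fin (2*k), r₂ i j → n i = n j) →
        dotZ k m n = 0) ↔
      ∃ π : Equiv.Perm (Fin k), Pperm k π ≤ r₁ ∧ Pperm k π ≤ r₂ := by
  classical
  set s : Setoid (Fin (2*k)) := r₁ ⊓ r₂ with hsdef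
  constructor
  · intro H
    -- Step 1: each class of `s` is balanced between the two halves.
    have key : ∀ x : Fin (2*k),
        (Finset.univ.filter (fun j : Fin (2*k) => (j:ℕ) < k ∧ s x j)).card =
        (Finset.univ.filter (fun j : Fin (2*k) => ¬ (j:ℕ) < k ∧ s x j)).card := by
      intro x
      set m : Fin (2*k) → ℤ := fun j => if r₁ x j then 1 else 0 with hm
      set n : Fin (2*k) → ℤ := fun j => if r₂ x j then 1 else 0 with hn
      have hmc : ∀ i j : Fin (2*k), r₁ i j → m i = m j := by
        intro i j hij
        simp only [hm]
        by_cases h : r₁ x i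
        · have h2 : r₁ x j := r₁.trans h hij
          simp [h, h2]
        · have h2 : ¬ r₁ x j := fun h' => h (r₁.trans h' (r₁.symm hij))
          simp [h, h2]
      have hnc : ∀ i j : Fin (2*k), r₂ i j → n i = n j := by
        intro i j hij
        simp only [hn]
        by_cases h : r₂ x i
        · have h2 : r₂ x j := r₂.trans h hij
          simp [h, h2]
        · have h2 : ¬ r₂ x j := fun h' => h (r₂.trans h' (r₂.symm hij))
          simp [h, h2]
      have H0 := H m n hmc hnc
      have hterm : ∀ j : Fin (2*k),
          (if (j:ℕ) < k then (1:ℤ) else -1) * m j * n j =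
            (if (j:ℕ) < k ∧ s x j then (1:ℤ) else 0) -
            (if ¬ (j:ℕ) < k ∧ s x j then (1:ℤ) else 0) := by
        intro j
        have hsxj : s x j ↔ (r₁ x j ∧ r₂ x j) := Setoid.inf_iff_and
        by_cases h1 : (j:ℕ) < k <;> by_cases h2 : r₁ x j <;> by_cases h3 : r₂ x j <;>
          simp [hm, hn, h1, h2, h3, hsxj]
      rw [dotZ] at H0
      rw [Finset.sum_congr rfl (fun j _ => hterm j), Finset.sum_sub_distrib,
        Finset.sum_boole, Finset.sum_boole, sub_eq_zero] at H0
      exact_mod_cast H0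
    -- Step 2: build a class-preserving bijection between the two halves.
    let L := {i : Fin (2*k) // (i:ℕ) < k}
    let U := {i : Fin (2*k) // ¬ (i:ℕ) < k}
    let fL : L → Quotient s := fun i => Quotient.mk s i.val
    let fU : U → Quotient s := fun i => Quotient.mk s i.val
    have hcard : ∀ q : Quotient s,
        Fintype.card {i : L // fL i = q} = Fintype.card {i : U // fU i = q} := by
      intro q
      obtain ⟨x, rfl⟩ := q.exists_rep
      have e1 : {i : L // fL i = Quotient.mk s x} ≃
          {j : Fin (2*k) // (j:ℕ) < k ∧ s x j} :=
        (Equiv.subtypeSubtypeEquivSubtypeInter (fun j : Fin (2*k) => (j:ℕ) < k)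
            (fun j : Fin (2*k) => Quotient.mk s j = Quotient.mk s x)).trans
          (Equiv.subtypeEquivRight (fun j => by
            constructor
            · rintro ⟨h1, h2⟩; exact ⟨h1, s.symm (Quotient.exact h2)⟩
            · rintro ⟨h1, h2⟩; exact ⟨h1, Quotient.sound (s.symm h2)⟩))
      have e2 : {i : U // fU i = Quotient.mk s x} ≃
          {j : Fin (2*k) // ¬ (j:ℕ) < k ∧ s x j} :=
        (Equiv.subtypeSubtypeEquivSubtypeInter (fun j : Fin (2*k) => ¬ (j:ℕ) < k)
            (fun j : Fin (2*k) => Quotient.mk s j = Quotient.mk s x)).trans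
          (Equiv.subtypeEquivRight (fun j => by
            constructor
            · rintro ⟨h1, h2⟩; exact ⟨h1, s.symm (Quotient.exact h2)⟩
            · rintro ⟨h1, h2⟩; exact ⟨h1, Quotient.sound (s.symm h2)⟩))
      rw [Fintype.card_congr e1, Fintype.card_congr e2, Fintype.card_subtype,
        Fintype.card_subtype]
      exact key x
    let g : ∀ q : Quotient s, {i : L // fL i = q} ≃ {i : U // fU i = q} :=
      fun q => Fintype.equivOfCardEq (hcard q)
    let σ : L ≃ U :=
      (Equiv.sigmaFiberEquiv fL).symm.trans
        ((Equiv.sigmaCongrRight g).trans (Equiv.sigmaFiberEquiv fU))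
    have hσ : ∀ i : L, fU (σ i) = fL i := fun i => (g (fL i) ⟨i, rfl⟩).2
    -- Step 3: the permutation.
    let eqL : Fin k ≃ L :=
      { toFun := fun i => ⟨⟨(i:ℕ), by have := i.isLt; omega⟩, i.isLt⟩
        invFun := fun i => ⟨(i.val : ℕ), i.prop⟩
        left_inv := fun i => rfl
        right_inv := fun i => rfl }
    let eqU : Fin k ≃ U :=
      { toFun := fun i => ⟨⟨k + (i:ℕ), by have := i.isLt; omega⟩, by
          show ¬ k + (i:ℕ) < k; omega⟩
        invFun := fun i => ⟨(i.val : ℕ) - k, by have h1 := i.val.isLt; have h2 := i.prop; omega⟩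
        left_inv := fun i => by
          apply Fin.ext
          show k + (i:ℕ) - k = (i:ℕ)
          omega
        right_inv := fun u => by
          apply Subtype.ext
          apply Fin.ext
          show k + ((u.val:ℕ) - k) = (u.val:ℕ)
          have := u.prop
          omega }
    let π : Equiv.Perm (Fin k) := eqL.trans (σ.trans eqU.symm)
    have hrel : ∀ i : Fin k, s (eqL i).val (eqU (π i)).val := by
      intro i
      have h1 : eqU (π i) = σ (eqL i) := eqU.apply_symm_apply _
      rw [h1]
      exact s.symm (Quotient.exact (hσ (eqL i)))
    have main : ∀ a b : Fin (2*k), (Pperm k π) a b → s a b := by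
      have half : ∀ a b : Fin (2*k), (a:ℕ) < k → ¬ (b:ℕ) < k → (Pperm k π) a b → s a b := by
        intro a b ha hb hab
        have hab' : (⟨(a:ℕ), ha⟩ : Fin k) =
            π.symm ⟨(b:ℕ) - k, by have := b.isLt; omega⟩ := by
          have := (Setoid.ker_def).mp hab
          rwa [dif_pos ha, dif_neg hb] at this
        have hπ : π ⟨(a:ℕ), ha⟩ = ⟨(b:ℕ) - k, by have := b.isLt; omega⟩ := by
          rw [hab']; exact π.apply_symm_apply _
        have h2 := hrel ⟨(a:ℕ), ha⟩
        have hL : (eqL ⟨(a:ℕ), ha⟩).val = a := by ext; rfl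
        have hU : (eqU (π ⟨(a:ℕ), ha⟩)).val = b := by
          rw [hπ]
          apply Fin.ext
          show k + ((b:ℕ) - k) = (b:ℕ)
          omega
        rwa [hL, hU] at h2
      intro a b hab
      by_cases ha : (a:ℕ) < k <;> by_cases hb : (b:ℕ) < k
      · have := (Setoid.ker_def).mp hab
        rw [dif_pos ha, dif_pos hb] at this
        have hv : (a:ℕ) = (b:ℕ) := Fin.mk_eq_mk.mp this
        have hab2 : a = b := Fin.ext hv
        rw [hab2]
      · exact half a b ha hb hab
      · exact s.symm (half b a hb ha ((Pperm k π).symm hab))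
      · have := (Setoid.ker_def).mp hab
        rw [dif_neg ha, dif_neg hb] at this
        have h2' := π.symm.injective this
        have h3 := congrArg Fin.val h2'
        have hav := a.isLt
        have hbv := b.isLt
        have hab2 : a = b := Fin.ext (by
          show (a:ℕ) = (b:ℕ)
          simp only [] at h3
          omega)
        rw [hab2]
    refine ⟨π, Setoid.le_def.mpr (fun {a b} h => ?_), Setoid.le_def.mpr (fun {a b} h => ?_)⟩
    · exact (Setoid.inf_iff_and.mp (main a b h)).1
    · exact (Setoid.inf_iff_and.mp (main a b h)).2
  · rintro ⟨π, h1, h2⟩ m n hm hn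
    set lo : Fin k → Fin (2*k) := fun i => ⟨(i:ℕ), by have := i.isLt; omega⟩ with hlo
    set hi : Fin k → Fin (2*k) := fun i => ⟨k + (π i : ℕ), by have := (π i).isLt; omega⟩ with hhi
    have hker : ∀ i : Fin k, (Pperm k π) (lo i) (hi i) := by
      intro i
      apply (Setoid.ker_def).mpr
      have hlt : ((lo i : Fin (2*k)) : ℕ) < k := i.isLt
      have hnlt : ¬ ((hi i : Fin (2*k)) : ℕ) < k := by simp [hhi]
      rw [dif_pos hlt, dif_neg hnlt]
      have : (⟨((hi i : Fin (2*k)) : ℕ) - k, by have := (hi i).isLt; omega⟩ : Fin k) = π i := by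
        ext; simp [hhi]
      rw [this, Equiv.symm_apply_apply]
    have hmeq : ∀ i : Fin k, m (lo i) = m (hi i) :=
      fun i => hm _ _ (Setoid.le_def.mp h1 (hker i))
    have hneq : ∀ i : Fin k, n (lo i) = n (hi i) :=
      fun i => hn _ _ (Setoid.le_def.mp h2 (hker i))
    let E : Fin k ⊕ Fin k ≃ Fin (2*k) :=
      (Equiv.sumCongr (Equiv.refl (Fin k)) π).trans
        (finSumFinEquiv.trans (finCongr (by ring)))
    set gfun : Fin (2*k) → ℤ := fun j => (if (j:ℕ) < k then 1 else -1) * m j * n j with hg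
    have hElo : ∀ i : Fin k, E (Sum.inl i) = lo i := by
      intro i; ext; simp [E, hlo, finSumFinEquiv]
    have hEhi : ∀ i : Fin k, E (Sum.inr i) = hi i := by
      intro i; ext; simp [E, hhi, finSumFinEquiv]; omega
    have : dotZ k m n = ∑ x : Fin k ⊕ Fin k, gfun (E x) := (Equiv.sum_comp E gfun).symm
    rw [this, Fintype.sum_sum_type, ← Finset.sum_add_distrib]
    apply Finset.sum_eq_zero
    intro i _
    rw [hElo i, hEhi i, hg]
    simp only []
    rw [if_pos (show ((lo i : Fin (2*k)) : ℕ) < k from i.isLt),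
      if_neg (show ¬ ((hi i : Fin (2*k)) : ℕ) < k by simp [hhi]),
      hmeq i, hneq i]
    ring
end

section
/- Let N, k be positive integers and ω = e^{2πi/N}. Let Π_1, Π_2 be partitions of {1,…,2k} with |Π_1| + |Π_2| < 2k. Then |⟨I_{Π_1}| F^{⊗k,k} |I_{Π_2}⟩|² ≤ N^{|Π_1|+|Π_2|−2k} ≤ 1/N, where ⟨I_{Π_1}| F^{⊗k,k} |I_{Π_2}⟩ = (|I_{Π_1}|·|I_{Π_2}|)^{−1/2} N^{−k} Σ_{m∈I_{Π_1}, n∈I_{Π_2}} ω^{m·n} and m·n = Σ_{j=1}^k m_j n_j − Σ_{j=k+1}^{2k} m_j n_j. -/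
open scoped BigOperators Classical

/-- The set `I_Π` of tuples whose equality pattern is exactly `r`. -/
def Iset (N n : ℕ) (r : Setoid (Fin n)) : Set (Fin n → Fin N) :=
  {v | ∀ i j : Fin n, v i = v j ↔ r i j}

/-- The unit vector `|I_Π⟩ = |I_Π|^{-1/2} ∑_{n ∈ I_Π} |n⟩`. -/
noncomputable def ketI (N n : ℕ) (r : Setoid (Fin n)) : (Fin n → Fin N) → ℂ :=
  fun v => if v ∈ Iset N n r then ((Real.sqrt ((Iset N n r).ncard) : ℂ))⁻¹ else 0

/-- The matrix element `⟨I_{Π₁}| F^{⊗k,k} |I_{Π₂}⟩`. -/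
noncomputable def matEltI (N k : ℕ) (r₁ r₂ : Setoid (Fin (2*k))) : ℂ :=
  ∑ a : Fin (2*k) → Fin N, ∑ b : Fin (2*k) → Fin N,
    (starRingEnd ℂ) (ketI N (2*k) r₁ a) * Fkk N k a b * ketI N (2*k) r₂ b

/-! Every entry of `F^{⊗k,k}` has modulus `N^{-k}`, so by the triangle inequality the matrix
element is at most `N^{-k}` times the product of the `ℓ¹`-norms of the two unit vectors, which is
`N^{-k} √(|I_{Π₁}| |I_{Π₂}|)`. A tuple in `I_Π` is determined by its values on the blocks of `Π`,
so `|I_Π| ≤ N^{|Π|}`. -/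

theorem norm_sum_sum_conj_mul_mul_le {𝕜 ι κ : Type*} [RCLike 𝕜] [Fintype ι] [Fintype κ]
    (u : ι → 𝕜) (A : ι → κ → 𝕜) (v : κ → 𝕜) (c : ℝ) (hA : ∀ i j, ‖A i j‖ ≤ c) :
    ‖∑ i, ∑ j, starRingEnd 𝕜 (u i) * A i j * v j‖ ≤ c * ((∑ i, ‖u i‖) * ∑ j, ‖v j‖) := by
  rw [Finset.sum_mul_sum, Finset.mul_sum]
  refine (norm_sum_le _ _).trans (Finset.sum_le_sum fun i _ => ?_)
  rw [Finset.mul_sum]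
  refine (norm_sum_le _ _).trans (Finset.sum_le_sum fun j _ => ?_)
  rw [norm_mul, norm_mul, RCLike.norm_conj, mul_right_comm, mul_comm c]
  gcongr
  exact hA i j

theorem norm_Fmat (N : ℕ) (i j : Fin N) : ‖Fmat N i j‖ = (√N)⁻¹ := by
  have : (2 * Real.pi * Complex.I * (((i : ℕ) + 1) * ((j : ℕ) + 1)) / N : ℂ)
      = ((2 * Real.pi * (((i : ℕ) + 1) * ((j : ℕ) + 1)) / N : ℝ) : ℂ) * Complex.I := by
    push_cast
    ring
  rw [Fmat, norm_mul, this, Complex.norm_exp_ofReal_mul_I, mul_one, norm_inv,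
    Complex.norm_real, Real.norm_of_nonneg (Real.sqrt_nonneg _)]

theorem norm_Fkk (N k : ℕ) (a b : Fin (2*k) → Fin N) :
    ‖Fkk N k a b‖ = (√N ^ (2*k))⁻¹ := by
  simp [Fkk, norm_prod, apply_ite norm, norm_Fmat]

theorem Iset_subset_range_comp_mk (N n : ℕ) (r : Setoid (Fin n)) :
    Iset N n r ⊆ Set.range fun w : Quotient r → Fin N => w ∘ Quotient.mk r :=
  fun v hv => ⟨Quotient.lift v fun i j hij => (hv i j).mpr hij, rfl⟩

theorem ncard_Iset_le (N n : ℕ) (r : Setoid (Fin n)) :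
    (Iset N n r).ncard ≤ N ^ numBlocks r := by
  calc (Iset N n r).ncard
      ≤ (Set.range fun w : Quotient r → Fin N => w ∘ Quotient.mk r).ncard :=
        Set.ncard_le_ncard (Iset_subset_range_comp_mk N n r)
    _ = N ^ numBlocks r := by
        rw [Set.ncard_range_of_injective Quotient.mk_surjective.injective_comp_right,
          Nat.card_fun, Nat.card_fin, numBlocks]

theorem sum_norm_ketI (N n : ℕ) (r : Setoid (Fin n)) :
    ∑ v, ‖ketI N n r v‖ = √(Iset N n r).ncard := by
  simp only [ketI, apply_ite norm, norm_inv, Complex.norm_real, norm_zero,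
    Real.norm_of_nonneg (Real.sqrt_nonneg _)]
  rw [Finset.sum_ite, Finset.sum_const_zero, add_zero, Finset.sum_const, nsmul_eq_mul,
    ← div_eq_mul_inv, Set.filter_mem_univ_eq_toFinset, ← Set.ncard_eq_toFinset_card',
    Real.div_sqrt]

theorem norm_matEltI_le (N k : ℕ) (r₁ r₂ : Setoid (Fin (2*k))) :
    ‖matEltI N k r₁ r₂‖ ≤
      (√N ^ (2*k))⁻¹ * (√(Iset N (2*k) r₁).ncard * √(Iset N (2*k) r₂).ncard) := by
  rw [matEltI, ← sum_norm_ketI, ← sum_norm_ketI]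
  exact norm_sum_sum_conj_mul_mul_le _ _ _ _ fun a b => (norm_Fkk N k a b).le

theorem norm_matEltI_sq_le (N k : ℕ) (r₁ r₂ : Setoid (Fin (2*k))) :
    ‖matEltI N k r₁ r₂‖ ^ 2 ≤
      (N : ℝ) ^ numBlocks r₁ * (N : ℝ) ^ numBlocks r₂ / (N : ℝ) ^ (2*k) := by
  have h₁ : ((Iset N (2*k) r₁).ncard : ℝ) ≤ (N : ℝ) ^ numBlocks r₁ := by
    exact_mod_cast ncard_Iset_le N (2*k) r₁
  have h₂ : ((Iset N (2*k) r₂).ncard : ℝ) ≤ (N : ℝ) ^ numBlocks r₂ := by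
    exact_mod_cast ncard_Iset_le N (2*k) r₂
  calc ‖matEltI N k r₁ r₂‖ ^ 2
      ≤ ((√N ^ (2*k))⁻¹ * (√(Iset N (2*k) r₁).ncard * √(Iset N (2*k) r₂).ncard)) ^ 2 :=
        pow_le_pow_left₀ (norm_nonneg _) (norm_matEltI_le N k r₁ r₂) 2
    _ = (Iset N (2*k) r₁).ncard * (Iset N (2*k) r₂).ncard / (N : ℝ) ^ (2*k) := by
        rw [mul_pow, mul_pow, inv_pow, ← pow_mul, mul_comm (2*k), pow_mul, Real.sq_sqrt,
          Real.sq_sqrt, Real.sq_sqrt] <;> first | positivity | ring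
    _ ≤ _ := by gcongr

theorem stmt18_general (N k : ℕ) (hN : 0 < N) (r₁ r₂ : Setoid (Fin (2*k)))
    (hlt : numBlocks r₁ + numBlocks r₂ < 2*k) :
    ‖matEltI N k r₁ r₂‖ ^ 2 ≤
        (N : ℝ) ^ ((numBlocks r₁ + numBlocks r₂ : ℤ) - 2*k) ∧
      (N : ℝ) ^ ((numBlocks r₁ + numBlocks r₂ : ℤ) - 2*k) ≤ 1/(N : ℝ) := by
  have hN₀ : (N : ℝ) ≠ 0 := by positivity
  have hN₁ : (1 : ℝ) ≤ N := by exact_mod_cast hN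
  have hexp : (N : ℝ) ^ ((numBlocks r₁ + numBlocks r₂ : ℤ) - 2*k)
      = (N : ℝ) ^ numBlocks r₁ * (N : ℝ) ^ numBlocks r₂ / (N : ℝ) ^ (2*k) := by
    rw [zpow_sub₀ hN₀, zpow_add₀ hN₀]
    norm_cast
  refine ⟨hexp ▸ norm_matEltI_sq_le N k r₁ r₂, ?_⟩
  calc (N : ℝ) ^ ((numBlocks r₁ + numBlocks r₂ : ℤ) - 2*k) ≤ (N : ℝ) ^ (-1 : ℤ) :=
        zpow_le_zpow_right₀ hN₁ (by omega)
    _ = 1/(N : ℝ) := by rw [zpow_neg_one, one_div]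

theorem stmt18 (N k : ℕ) (hN : 0 < N) (hk : 0 < k) (r₁ r₂ : Setoid (Fin (2*k)))
    (hlt : numBlocks r₁ + numBlocks r₂ < 2*k) :
    ‖matEltI N k r₁ r₂‖ ^ 2 ≤
        (N : ℝ) ^ ((numBlocks r₁ + numBlocks r₂ : ℤ) - 2*k) ∧
      (N : ℝ) ^ ((numBlocks r₁ + numBlocks r₂ : ℤ) - 2*k) ≤ 1/(N : ℝ) :=
  stmt18_general N k hN r₁ r₂ hlt
end
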